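/- arXiv:2104.13487 — 13 statements merged into one kernel-verified Lean document; each statement's English description precedes it below -/
import Mathlib

section
/- Let (𝒞, J) be a small site in which no object is covered by the empty sieve (i.e., for every object C of 𝒞, the empty sieve on C is not J-covering). If F and G are J-sheaves of sets, then the coproduct presheaf F ⨿ G (computed in the category of presheaves 𝒞ᵒᵖ ⥤ Type) is J-separated. -/
open CategoryTheory Limits Opposite

universe u

namespace CategoryTheory

lemma GrothendieckTopology.exists_arrow_of_mem {C : Type*} [Category C]
    (J : GrothendieckTopology C) {X : C} (hX : (⊥ : Sieve X) ∉ J X) {S : Sieve X}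
    (hS : S ∈ J X) : ∃ (Y : C) (f : Y ⟶ X), S f := by
  by_contra! h
  exact hX (by rwa [show S = ⊥ from Sieve.ext fun Y f => iff_of_false (h Y f) id] at hS)

namespace Presieve

universe w

variable {C : Type*} [Category C] {F G : Cᵒᵖ ⥤ Type w} {X : C} {R : Presieve X}

/-- Restriction preserves the summand, so over an inhabited presieve two sections with equal
restrictions lie in the same summand. -/
lemma IsSeparatedFor.functorToTypesCoprod (hR : ∃ (Y : C) (f : Y ⟶ X), R f)
    (hF : IsSeparatedFor F R) (hG : IsSeparatedFor G R) :
    IsSeparatedFor (FunctorToTypes.coprod F G) R := by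
  intro _ t₁ t₂ h₁ h₂
  have agree : ∀ ⦃Y⦄ ⦃f : Y ⟶ X⦄, R f →
      (FunctorToTypes.coprod F G).map f.op t₁ = (FunctorToTypes.coprod F G).map f.op t₂ :=
    fun _ f hf => (h₁ f hf).trans (h₂ f hf).symm
  obtain ⟨Y₀, f₀, hf₀⟩ := hR
  have agree₀ := agree hf₀
  rcases t₁ with a₁ | b₁ <;> rcases t₂ with a₂ | b₂
  · exact congrArg Sum.inl (hF.ext fun _ _ hf => Sum.inl.inj (agree hf))
  · exact absurd agree₀ Sum.inl_ne_inr
  · exact absurd agree₀ Sum.inr_ne_inl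
  · exact congrArg Sum.inr (hG.ext fun _ _ hf => Sum.inr.inj (agree hf))

end Presieve

end CategoryTheory

/-- If `(C, J)` is a small site in which no object is covered by the empty
sieve, and `F`, `G` are `J`-sheaves of sets, then the coproduct presheaf `F ⨿ G`
(computed in the presheaf category) is `J`-separated. -/
theorem coprod_of_sheaves_isSeparated {C : Type u} [SmallCategory C]
    (J : GrothendieckTopology C)
    (hJ : ∀ X : C, (⊥ : Sieve X) ∉ J X)
    (F G : Cᵒᵖ ⥤ Type u)
    (hF : Presieve.IsSheaf J F) (hG : Presieve.IsSheaf J G) :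
    Presieve.IsSeparated J (F ⨿ G) :=
  Presieve.isSeparated_iso J (FunctorToTypes.binaryCoproductIso F G).symm fun X _ hS =>
    Presieve.IsSeparatedFor.functorToTypesCoprod (J.exists_arrow_of_mem (hJ X) hS)
      (hF.isSeparated _ hS) (hG.isSeparated _ hS)
end

section
/- Let (𝒞, J) be a small subcanonical site, and let 𝒟 be the full subcategory of 𝒞 on those objects D for which the empty sieve on D is not J-covering. Then restriction of natural transformations induces a group isomorphism Aut(𝟭_𝒞) ≅ Aut(𝟭_𝒟) between the automorphism group of the identity functor of 𝒞 and that of 𝒟. -/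
open CategoryTheory Limits Opposite

universe u

/-!
If the empty sieve covers `X`, the sheaf condition for a representable `yoneda.obj Z` on that
sieve says that `X ⟶ Z` has at most one element; and every object mapping to such an `X` is
again covered by the empty sieve. So outside the full subcategory `D` all parallel morphisms out
of an object agree. Hence an endomorphism of `𝟭 C` is determined by its components on `D`, and
any endomorphism of `𝟭 D` extends by identities to one of `𝟭 C`: restriction is a monoid
isomorphism `End (𝟭 C) ≃* End (𝟭 D)`, and passing to units gives the theorem.
-/

namespace CategoryTheory

namespace ObjectProperty

variable {C : Type*} [Category C] (P : ObjectProperty C)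

@[simps]
def restrictCatCenter : CatCenter C →* CatCenter P.FullSubcategory where
  toFun η :=
    { app X := homMk (η.app X.obj)
      naturality _ _ f := by ext; exact η.naturality f.hom }
  map_one' := rfl
  map_mul' _ _ := rfl

variable {P} (hP : ∀ ⦃X Y : C⦄, (X ⟶ Y) → P X → P Y)
  (hsubsingleton : ∀ X, ¬ P X → ∀ Y, Subsingleton (X ⟶ Y))
include hsubsingleton

lemma restrictCatCenter_injective : Function.Injective P.restrictCatCenter := by
  intro η η' h
  ext X
  by_cases hX : P X
  · exact congrArg (fun τ : CatCenter P.FullSubcategory => (τ.app ⟨X, hX⟩).hom) h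
  · exact (hsubsingleton X hX X).elim _ _

include hP in
lemma restrictCatCenter_surjective : Function.Surjective P.restrictCatCenter := by
  classical
  intro τ
  refine
    ⟨{ app X := if hX : P X then (τ.app ⟨X, hX⟩).hom else 𝟙 X
       naturality := ?_ }, ?_⟩
  · intro X Y f
    by_cases hX : P X
    · have hY := hP f hX
      have hτ := τ.naturality (X := ⟨X, hX⟩) (Y := ⟨Y, hY⟩) (homMk f)
      simpa [dif_pos hX, dif_pos hY] using congrArg InducedCategory.Hom.hom hτ
    · exact (hsubsingleton X hX Y).elim _ _
  · ext X
    exact dif_pos X.property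

noncomputable def catCenterEquiv : CatCenter C ≃* CatCenter P.FullSubcategory :=
  MulEquiv.ofBijective P.restrictCatCenter
    ⟨restrictCatCenter_injective hsubsingleton, restrictCatCenter_surjective hP hsubsingleton⟩

noncomputable def autIdEquiv : Aut (𝟭 C) ≃* Aut (𝟭 P.FullSubcategory) :=
  (Aut.unitsEndEquivAut _).symm.trans
    ((Units.mapEquiv (catCenterEquiv hP hsubsingleton)).trans (Aut.unitsEndEquivAut _))

end ObjectProperty

variable {C : Type*} [Category C] {J : GrothendieckTopology C}

lemma GrothendieckTopology.bot_mem_of_hom {X Y : C} (f : X ⟶ Y) (h : ⊥ ∈ J Y) : ⊥ ∈ J X :=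
  Sieve.pullback_bot f ▸ J.pullback_stable f h

lemma Presieve.IsSheaf.subsingleton_of_bot_mem {F : Cᵒᵖ ⥤ Type*}
    (hF : Presieve.IsSheaf J F) {X : C} (hX : ⊥ ∈ J X) : Subsingleton (F.obj (op X)) :=
  ⟨fun _ _ => (hF _ hX).isSeparatedFor.ext fun _ _ hf => hf.elim⟩

end CategoryTheory

/-- For a small subcanonical site `(C, J)`, with `D` the full subcategory
of `C` on the objects not covered by the empty sieve, restriction of natural
transformations induces a group isomorphism `Aut (𝟭 C) ≃* Aut (𝟭 D)`. -/
theorem aut_id_iso_aut_id_fullSubcategory {C : Type u} [SmallCategory C]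
    (J : GrothendieckTopology C)
    (hsub : ∀ X : C, Presieve.IsSheaf J (yoneda.obj X)) :
    ∃ e : Aut (𝟭 C) ≃*
        Aut (𝟭 (ObjectProperty.FullSubcategory (fun D : C => (⊥ : Sieve D) ∉ J D))),
      ∀ (ψ : Aut (𝟭 C)) (D : ObjectProperty.FullSubcategory (fun D : C => (⊥ : Sieve D) ∉ J D)),
        ((e ψ).hom.app D).hom = ψ.hom.app D.obj := by
  have hclosed : ∀ ⦃X Y : C⦄, (X ⟶ Y) → (⊥ : Sieve X) ∉ J X → (⊥ : Sieve Y) ∉ J Y :=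
    fun _ _ f hX hY => hX (J.bot_mem_of_hom f hY)
  have hsubsingleton : ∀ X : C, ¬ (⊥ : Sieve X) ∉ J X → ∀ Y, Subsingleton (X ⟶ Y) :=
    fun _ hX Y => (hsub Y).subsingleton_of_bot_mem (not_not.mp hX)
  exact ⟨ObjectProperty.autIdEquiv hclosed hsubsingleton, fun _ _ => rfl⟩
end

section
/- Let ℰ be a locally small category and let ι : 𝒞 ⥤ ℰ be the inclusion of a small full subcategory that is dense in ℰ, meaning that for every object E of ℰ, the canonical cocone over the projection functor from the comma category of pairs (C, f : ι(C) → E) to ℰ (sending (C, f) to ι(C)), with cocone legs given by the morphisms f, is a colimit cocone. Then restriction along ι induces a group isomorphism Aut(𝟭_ℰ) ≅ Aut(𝟭_𝒞). -/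
open CategoryTheory Limits Opposite

universe u v

/-- The canonical cocone on the projection functor from the comma category of pairs
`(C, f : ι.obj C ⟶ X)` to `E`, with vertex `X` and cocone legs the morphisms `f`. -/
@[simps]
def canonicalDenseCocone {C : Type u} [SmallCategory C] {E : Type v} [Category.{u} E]
    (ι : C ⥤ E) (X : E) : Cocone (CostructuredArrow.proj ι X ⋙ ι) where
  pt := X
  ι :=
    { app := fun f => f.hom
      naturality := fun f g h => (CostructuredArrow.w h).trans (Category.comp_id _).symm }

/-! The automorphism groups are the unit groups of the monoids `End (𝟭 E)` and `End (𝟭 C)`,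
and both monoids are identified with `End ι`. Density says that `𝟭 E` is the pointwise left Kan
extension of `ι` along itself, so a natural endomorphism of `𝟭 E` is the same as one of `ι`
(restriction to the objects `ι X` is bijective); full faithfulness of `ι` makes whiskering
`End (𝟭 C) → End ι` bijective. -/

namespace CategoryTheory

universe v₁ v₂ u₁ u₂

section

variable {C : Type u₁} [Category.{v₁} C] {E : Type u₂} [Category.{v₂} E]

def Aut.mulEquivOfEndMulEquiv {X : C} {Y : E} (e : End X ≃* End Y) : Aut X ≃* Aut Y :=
  (Aut.unitsEndEquivAut X).symm.trans <| (Units.mapEquiv e).trans <| Aut.unitsEndEquivAut Y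

namespace Functor

variable (ι : C ⥤ E)

@[simps]
def whiskerLeftEndHom : End (𝟭 E) →* End ι where
  toFun α :=
    { app X := α.app (ι.obj X)
      naturality _ _ f := α.naturality (ι.map f) }
  map_one' := rfl
  map_mul' _ _ := rfl

def whiskerRightEndHom : End (𝟭 C) →* End ι where
  toFun τ :=
    { app X := ι.map (τ.app X)
      naturality _ _ f := by simpa using congr_arg ι.map (τ.naturality f) }
  map_one' := NatTrans.ext <| funext fun _ => ι.map_id _
  map_mul' _ _ := NatTrans.ext <| funext fun _ => ι.map_comp _ _

lemma bijective_whiskerLeftEndHom [ι.IsDense] : Function.Bijective ι.whiskerLeftEndHom := by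
  constructor
  · intro α β h
    refine (𝟭 E).hom_ext_of_isLeftKanExtension ι.rightUnitor.inv α β ?_
    ext X
    simpa using congr_app h X
  · intro τ
    refine ⟨(𝟭 E).descOfIsLeftKanExtension ι.rightUnitor.inv (𝟭 E) (τ ≫ ι.rightUnitor.inv),
      NatTrans.ext <| funext fun X => ?_⟩
    simpa using (𝟭 E).descOfIsLeftKanExtension_fac_app ι.rightUnitor.inv (𝟭 E)
      (τ ≫ ι.rightUnitor.inv) X

lemma bijective_whiskerRightEndHom [ι.Full] [ι.Faithful] :
    Function.Bijective ι.whiskerRightEndHom := by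
  constructor
  · intro τ σ h
    exact NatTrans.ext <| funext fun X => ι.map_injective (congr_app h X)
  · intro σ
    refine ⟨{ app X := ι.preimage (σ.app X)
              naturality _ _ f := ι.map_injective (by simp [σ.naturality f]) },
      NatTrans.ext <| funext fun X => ι.map_preimage _⟩

end Functor

end

lemma Functor.isDense_of_isColimit_canonicalDenseCocone {C : Type u} [SmallCategory C]
    {E : Type v} [Category.{u} E] (ι : C ⥤ E)
    (hdense : ∀ X : E, Nonempty (IsColimit (canonicalDenseCocone ι X))) : ι.IsDense where
  isDenseAt X := ⟨(hdense X).some.ofIsoColimit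
    (Cocone.ext (Iso.refl X) fun _ => (Category.comp_id _).trans (Category.id_comp _).symm)⟩

end CategoryTheory

/-- If `ι : C ⥤ E` is the inclusion of a small full (and faithful) dense
subcategory of a locally small category `E`, then restriction along `ι` induces a
group isomorphism `Aut (𝟭 E) ≃* Aut (𝟭 C)`. -/
theorem aut_id_iso_of_dense {C : Type u} [SmallCategory C] {E : Type v} [Category.{u} E]
    (ι : C ⥤ E) [ι.Full] [ι.Faithful]
    (hdense : ∀ X : E, Nonempty (IsColimit (canonicalDenseCocone ι X))) :
    ∃ e : Aut (𝟭 E) ≃* Aut (𝟭 C),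
      ∀ (α : Aut (𝟭 E)) (X : C),
        ι.map ((e α).hom.app X) = α.hom.app (ι.obj X) := by
  have := ι.isDense_of_isColimit_canonicalDenseCocone hdense
  let restrict := MulEquiv.ofBijective _ ι.bijective_whiskerLeftEndHom
  let extend := MulEquiv.ofBijective _ ι.bijective_whiskerRightEndHom
  refine ⟨Aut.mulEquivOfEndMulEquiv (restrict.trans extend.symm), fun α X => ?_⟩
  -- `(e α).hom` unfolds to `extend.symm (restrict α.hom)`
  exact congr_app (extend.apply_symm_apply (restrict α.hom)) X
end

section
/- Let (𝒞, J) be a small subcanonical site in which no object is covered by the empty sieve. Then for every J-sheaf F of sets, the covariant isotropy group of F in the category Sh(𝒞, J) of J-sheaves, i.e. the group Aut(Under.forget F) of natural automorphisms of the projection functor from the under category F/Sh(𝒞, J) to Sh(𝒞, J), is isomorphic as a group to Aut(𝟭_𝒞), the group of natural automorphisms of the identity functor of 𝒞. -/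
open CategoryTheory Limits Opposite

universe u

/-!
For `X : C` let `F ⊔ yX` be the coproduct of `F` and the representable sheaf, viewed under `F`,
and let `γ_X` be its generic section at `X`. Maps `F ⊔ yV ⟶ a` under `F` classify the sections of
`a` at `V`, so an isotropy element `θ` is determined by the sections `θ(γ_X)`. A section of
`F ⊔ yX` is locally in one of the two summands. If `θ(γ_X)` were locally in `F`, then `θ` would be
constant on that patch, contradicting injectivity; so it is locally in `yX`, hence (as `yX` is a
sheaf) of the form `γ_X · e_X` for a unique `e_X : X ⟶ X`. Then `θ` acts on every `a` by
restriction along `e`, the `e_X` are natural, and `θ ↦ e` inverts the evident action of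
`Aut (𝟭 C)`.
-/

namespace CategoryTheory

open GrothendieckTopology GrothendieckTopology.Plus

variable {C : Type u} [SmallCategory C] {J : GrothendieckTopology C}

theorem GrothendieckTopology.Cover.nonempty_arrow (hJ : ∀ X : C, (⊥ : Sieve X) ∉ J X)
    {X : C} (S : J.Cover X) : Nonempty S.Arrow := by
  by_contra h
  have hbot : (S : Sieve X) = ⊥ := le_antisymm (fun Y f hf => h ⟨⟨Y, f, hf⟩⟩) bot_le
  exact hJ X (hbot ▸ S.condition)

theorem FunctorToTypes.coprod_ext_of_isSeparated (hJ : ∀ X : C, (⊥ : Sieve X) ∉ J X)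
    {P Q : Cᵒᵖ ⥤ Type u} (hP : Presieve.IsSeparated J P) (hQ : Presieve.IsSeparated J Q)
    {X : C} (S : J.Cover X) (x y : (FunctorToTypes.coprod P Q).obj (op X))
    (h : ∀ I : S.Arrow,
      (FunctorToTypes.coprod P Q).map I.f.op x = (FunctorToTypes.coprod P Q).map I.f.op y) :
    x = y := by
  obtain ⟨I⟩ := S.nonempty_arrow hJ
  rcases x with x | x <;> rcases y with y | y
  · exact congrArg Sum.inl <| (hP S S.condition).ext fun Y f hf => Sum.inl_injective (h ⟨Y, f, hf⟩)
  · exact absurd (h I) Sum.inl_ne_inr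
  · exact absurd (h I) Sum.inr_ne_inl
  · exact congrArg Sum.inr <| (hQ S S.condition).ext fun Y f hf => Sum.inr_injective (h ⟨Y, f, hf⟩)

theorem GrothendieckTopology.Plus.exists_toPlus_inr_eq_mk {P Q : Cᵒᵖ ⥤ Type u}
    (hQ : Presieve.IsSheaf J Q) {X : C} (S : J.Cover X) (y : Meq (FunctorToTypes.coprod P Q) S)
    (hy : ∀ I : S.Arrow, ∃ q, y I = Sum.inr q) :
    ∃ q : Q.obj (op X), (J.toPlus (FunctorToTypes.coprod P Q)).app (op X) (Sum.inr q) = mk y := by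
  choose q hq using hy
  let x : Presieve.FamilyOfElements Q ((S : Sieve X) : Presieve X) := fun Y f hf => q ⟨Y, f, hf⟩
  have hcompat : x.Compatible := by
    intro Y₁ Y₂ Z g₁ g₂ f₁ f₂ h₁ h₂ w
    have := y.condition
      (Cover.Relation.mk' (fst := ⟨Y₁, f₁, h₁⟩) (snd := ⟨Y₂, f₂, h₂⟩) ⟨Z, g₁, g₂, w⟩)
    change (FunctorToTypes.coprod P Q).map g₁.op (y ⟨Y₁, f₁, h₁⟩)
      = (FunctorToTypes.coprod P Q).map g₂.op (y ⟨Y₂, f₂, h₂⟩) at this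
    rw [hq, hq] at this
    exact Sum.inr_injective this
  obtain ⟨t, ht, -⟩ := hQ (S : Sieve X) S.condition x hcompat
  refine ⟨t, sep (FunctorToTypes.coprod P Q) S _ _ fun I => ?_⟩
  rw [← toPlus_apply, hq, show q I = Q.map I.f.op t from (ht I.f I.hf).symm]
  exact (NatTrans.naturality_apply (J.toPlus (FunctorToTypes.coprod P Q)) I.f.op
    (Sum.inr t : (FunctorToTypes.coprod P Q).obj (op X))).symm

namespace Sheaf

variable (F : Sheaf J (Type u))

def centerToEndUnderForget : CatCenter C →* End (Under.forget F) where
  toFun x :=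
    { app a := ⟨(Functor.whiskerRight (NatTrans.op x) a.right.obj : a.right.obj ⟶ a.right.obj)⟩
      naturality a b m := by
        ext V : 3
        exact (m.right.hom.naturality _).symm }
  map_one' := by
    apply NatTrans.ext
    ext a V z
    exact Functor.map_id_apply a.right.obj _ z
  map_mul' x y := by
    apply NatTrans.ext
    ext a V z
    change a.right.obj.map ((x * y).app V.unop).op z = _
    rw [CatCenter.mul_app, op_comp]
    exact Functor.map_comp_apply a.right.obj _ _ z

variable {F} in
theorem underForget_naturality_apply (θ : Under.forget F ⟶ Under.forget F) {a b : Under F}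
    (m : a ⟶ b) (V : Cᵒᵖ) (z : a.right.obj.obj V) :
    (θ.app b).hom.app V (m.right.hom.app V z) = m.right.hom.app V ((θ.app a).hom.app V z) :=
  ConcreteCategory.congr_hom (congr_app (congrArg InducedCategory.Hom.hom (θ.naturality m)) V) z

theorem injective_app_hom_app_of_comp_eq_id {D : Type*} [Category D]
    {G G' : D ⥤ Sheaf J (Type u)} {θ : G ⟶ G'} {θ' : G' ⟶ G} (h : θ ≫ θ' = 𝟙 G) (d : D)
    (V : Cᵒᵖ) : Function.Injective ((θ.app d).hom.app V) :=
  Function.LeftInverse.injective (g := (θ'.app d).hom.app V) fun z =>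
    ConcreteCategory.congr_hom
      (congr_app (congrArg InducedCategory.Hom.hom (congr_app h d)) V) z

abbrev coprodYoneda (X : C) : Cᵒᵖ ⥤ Type u := FunctorToTypes.coprod F.obj (yoneda.obj X)

noncomputable def genericSection (X : C) : (J.plusObj (F.coprodYoneda X)).obj (op X) :=
  yonedaEquiv (FunctorToTypes.coprod.inr ≫ J.toPlus (F.coprodYoneda X))

theorem map_genericSection {V X : C} (f : V ⟶ X) :
    (J.plusObj (F.coprodYoneda X)).map f.op (F.genericSection X) =
      (J.toPlus (F.coprodYoneda X)).app (op V) (Sum.inr f) :=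
  map_yonedaEquiv _ f

section Subcanonical

variable [J.Subcanonical]

theorem coprodYoneda_ext (hJ : ∀ X : C, (⊥ : Sieve X) ∉ J X) (X Y : C)
    (S : J.Cover Y) (x y : (F.coprodYoneda X).obj (op Y))
    (h : ∀ I : S.Arrow, (F.coprodYoneda X).map I.f.op x = (F.coprodYoneda X).map I.f.op y) :
    x = y :=
  FunctorToTypes.coprod_ext_of_isSeparated hJ
    ((isSheaf_iff_isSheaf_of_type J F.obj).1 F.property).isSeparated
    (Subcanonical.isSheaf_of_isRepresentable (yoneda.obj X)).isSeparated S x y h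

/-- The coproduct `F ⊔ yX` in `Sheaf J (Type u)`: as `F` and `yX` are separated and no cover is
empty, their pointwise coproduct is separated, so a single plus construction sheafifies it. -/
noncomputable abbrev coprodYonedaSheaf (hJ : ∀ X : C, (⊥ : Sieve X) ∉ J X) (X : C) :
    Sheaf J (Type u) :=
  ⟨J.plusObj (F.coprodYoneda X), isSheaf_of_sep _ (F.coprodYoneda_ext hJ X)⟩

noncomputable abbrev coprodYonedaUnder (hJ : ∀ X : C, (⊥ : Sieve X) ∉ J X) (X : C) : Under F :=
  Under.mk (Y := F.coprodYonedaSheaf hJ X) ⟨FunctorToTypes.coprod.inl ≫ J.toPlus _⟩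

theorem map_genericSection_injective (hJ : ∀ X : C, (⊥ : Sieve X) ∉ J X) (V X : C) :
    Function.Injective fun f : V ⟶ X =>
      (J.plusObj (F.coprodYoneda X)).map f.op (F.genericSection X) := fun f g hfg => by
  simp only [map_genericSection] at hfg
  exact Sum.inr_injective (inj_of_sep (F.coprodYoneda X) (F.coprodYoneda_ext hJ X) V hfg)

theorem map_genericSection_ne_toPlus_inl (hJ : ∀ X : C, (⊥ : Sieve X) ∉ J X)
    {V X : C} (f : V ⟶ X) (b : F.obj.obj (op V)) :
    (J.plusObj (F.coprodYoneda X)).map f.op (F.genericSection X) ≠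
      (J.toPlus (F.coprodYoneda X)).app (op V) (Sum.inl b) := fun h => by
  rw [map_genericSection] at h
  exact Sum.inr_ne_inl (inj_of_sep (F.coprodYoneda X) (F.coprodYoneda_ext hJ X) V h)

variable {F}

noncomputable def coprodYonedaUnderDesc (hJ : ∀ X : C, (⊥ : Sieve X) ∉ J X)
    (a : Under F) {V : C} (z : a.right.obj.obj (op V)) : F.coprodYonedaUnder hJ V ⟶ a :=
  Under.homMk
    ⟨J.plusLift (FunctorToTypes.coprod.desc a.hom.hom (yonedaEquiv.symm z)) a.right.property⟩
    (by ext : 1; simp)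

theorem toPlus_comp_coprodYonedaUnderDesc_right (hJ : ∀ X : C, (⊥ : Sieve X) ∉ J X)
    (a : Under F) {V : C} (z : a.right.obj.obj (op V)) :
    J.toPlus (F.coprodYoneda V) ≫ (coprodYonedaUnderDesc hJ a z).right.hom =
      FunctorToTypes.coprod.desc a.hom.hom (yonedaEquiv.symm z) :=
  J.toPlus_plusLift _ _

theorem coprodYonedaUnderDesc_right_genericSection (hJ : ∀ X : C, (⊥ : Sieve X) ∉ J X)
    (a : Under F) {V : C} (z : a.right.obj.obj (op V)) :
    (coprodYonedaUnderDesc hJ a z).right.hom.app (op V) (F.genericSection V) = z := by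
  rw [genericSection, ← yonedaEquiv_comp, Category.assoc,
    toPlus_comp_coprodYonedaUnderDesc_right, FunctorToTypes.coprod.desc_inr, Equiv.apply_symm_apply]

theorem coprodYonedaUnder_right_app_toPlus_inl (hJ : ∀ X : C, (⊥ : Sieve X) ∉ J X)
    {X : C} {a : Under F} (f : F.coprodYonedaUnder hJ X ⟶ a) {V : Cᵒᵖ} (b : F.obj.obj V) :
    f.right.hom.app V ((J.toPlus (F.coprodYoneda X)).app V (Sum.inl b)) = a.hom.hom.app V b :=
  ConcreteCategory.congr_hom (congr_app (congrArg InducedCategory.Hom.hom (Under.w f)) V) b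

theorem app_apply_eq_coprodYonedaUnderDesc (hJ : ∀ X : C, (⊥ : Sieve X) ∉ J X)
    (θ : Under.forget F ⟶ Under.forget F) (a : Under F) {V : C} (z : a.right.obj.obj (op V)) :
    (θ.app a).hom.app (op V) z = (coprodYonedaUnderDesc hJ a z).right.hom.app (op V)
      ((θ.app (F.coprodYonedaUnder hJ V)).hom.app (op V) (F.genericSection V)) := by
  rw [← underForget_naturality_apply, coprodYonedaUnderDesc_right_genericSection]

theorem map_app_genericSection_ne_toPlus_inl (hJ : ∀ X : C, (⊥ : Sieve X) ∉ J X)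
    (θ : Under.forget F ⟶ Under.forget F) {X : C}
    (hθ : ∀ V, Function.Injective ((θ.app (F.coprodYonedaUnder hJ X)).hom.app V))
    {V : C} (f : V ⟶ X) (b : F.obj.obj (op V)) :
    (J.plusObj (F.coprodYoneda X)).map f.op
        ((θ.app (F.coprodYonedaUnder hJ X)).hom.app (op X) (F.genericSection X)) ≠
      (J.toPlus (F.coprodYoneda X)).app (op V) (Sum.inl b) := by
  intro hp
  -- `θ` commutes with the endomorphism `ε` of `F ⊔ yX` sending `γ_X` to `c`, and `ε` fixes `b`.
  have hconst : ∀ c, (θ.app (F.coprodYonedaUnder hJ X)).hom.app (op V)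
      ((J.plusObj (F.coprodYoneda X)).map f.op c) =
        (J.toPlus (F.coprodYoneda X)).app (op V) (Sum.inl b) := fun c => by
    let ε := coprodYonedaUnderDesc hJ (F.coprodYonedaUnder hJ X) c
    refine (NatTrans.naturality_apply (θ.app (F.coprodYonedaUnder hJ X)).hom f.op c).trans ?_
    refine (congrArg ((J.plusObj (F.coprodYoneda X)).map f.op)
      (app_apply_eq_coprodYonedaUnderDesc hJ θ (F.coprodYonedaUnder hJ X) c)).trans ?_
    refine (NatTrans.naturality_apply ε.right.hom f.op _).symm.trans ?_
    exact (congrArg (ε.right.hom.app (op V)) hp).trans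
      (coprodYonedaUnder_right_app_toPlus_inl hJ ε b)
  refine F.map_genericSection_ne_toPlus_inl hJ f b ?_
  rw [← hp]
  exact hθ (op V) ((hconst _).trans (hconst _).symm)

theorem exists_app_genericSection_eq (hJ : ∀ X : C, (⊥ : Sieve X) ∉ J X)
    (θ : Under.forget F ⟶ Under.forget F) {X : C}
    (hθ : ∀ V, Function.Injective ((θ.app (F.coprodYonedaUnder hJ X)).hom.app V)) :
    ∃ e : X ⟶ X, (θ.app (F.coprodYonedaUnder hJ X)).hom.app (op X) (F.genericSection X) =
      (J.plusObj (F.coprodYoneda X)).map e.op (F.genericSection X) := by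
  obtain ⟨S, y, hy⟩ := exists_rep (P := F.coprodYoneda X)
    ((θ.app (F.coprodYonedaUnder hJ X)).hom.app (op X) (F.genericSection X))
  have hinr : ∀ I : S.Arrow, ∃ g, y I = Sum.inr g := fun I => by
    rcases hyI : y I with b | g
    · refine absurd ?_ (map_app_genericSection_ne_toPlus_inl hJ θ hθ I.f b)
      rw [hy, ← toPlus_apply, hyI]
    · exact ⟨g, rfl⟩
  obtain ⟨e, he⟩ := exists_toPlus_inr_eq_mk
    (Subcanonical.isSheaf_of_isRepresentable (yoneda.obj X)) S y hinr
  exact ⟨e, hy.trans (he.symm.trans (F.map_genericSection e).symm)⟩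

theorem app_apply_eq_map_of_genericSection (hJ : ∀ X : C, (⊥ : Sieve X) ∉ J X)
    (θ : Under.forget F ⟶ Under.forget F) (e : ∀ X : C, X ⟶ X)
    (he : ∀ X, (θ.app (F.coprodYonedaUnder hJ X)).hom.app (op X) (F.genericSection X) =
      (J.plusObj (F.coprodYoneda X)).map (e X).op (F.genericSection X))
    (a : Under F) {V : C} (z : a.right.obj.obj (op V)) :
    (θ.app a).hom.app (op V) z = a.right.obj.map (e V).op z := by
  rw [app_apply_eq_coprodYonedaUnderDesc hJ θ a z, he]
  refine (NatTrans.naturality_apply (coprodYonedaUnderDesc hJ a z).right.hom _ _).trans ?_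
  rw [coprodYonedaUnderDesc_right_genericSection]

theorem naturality_of_genericSection (hJ : ∀ X : C, (⊥ : Sieve X) ∉ J X)
    (θ : Under.forget F ⟶ Under.forget F) (e : ∀ X : C, X ⟶ X)
    (he : ∀ X, (θ.app (F.coprodYonedaUnder hJ X)).hom.app (op X) (F.genericSection X) =
      (J.plusObj (F.coprodYoneda X)).map (e X).op (F.genericSection X))
    {V X : C} (g : V ⟶ X) : g ≫ e X = e V ≫ g := by
  apply F.map_genericSection_injective hJ V X
  change (J.plusObj (F.coprodYoneda X)).map (g ≫ e X).op (F.genericSection X) =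
    (J.plusObj (F.coprodYoneda X)).map (e V ≫ g).op (F.genericSection X)
  rw [op_comp, op_comp, Functor.map_comp_apply, Functor.map_comp_apply, ← he X]
  exact (NatTrans.naturality_apply (θ.app (F.coprodYonedaUnder hJ X)).hom g.op _).symm.trans
    (app_apply_eq_map_of_genericSection hJ θ e he (F.coprodYonedaUnder hJ X) _)

variable (F)

theorem exists_centerToEndUnderForget_eq (hJ : ∀ X : C, (⊥ : Sieve X) ∉ J X)
    (θ : End (Under.forget F)) (hθ : ∀ a V, Function.Injective ((θ.app a).hom.app V)) :
    ∃ x, F.centerToEndUnderForget x = θ := by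
  choose e he using fun X => exists_app_genericSection_eq hJ θ (X := X) (hθ _)
  refine ⟨⟨e, fun V X g => naturality_of_genericSection hJ θ e he g⟩, ?_⟩
  apply NatTrans.ext
  ext a V z
  exact (app_apply_eq_map_of_genericSection hJ θ e he a z).symm

theorem centerToEndUnderForget_injective (hJ : ∀ X : C, (⊥ : Sieve X) ∉ J X) :
    Function.Injective F.centerToEndUnderForget := fun x y h => by
  ext X
  apply F.map_genericSection_injective hJ X X
  exact congrArg
    (fun θ : End (Under.forget F) => ((θ.app (F.coprodYonedaUnder hJ X)).hom.app (op X))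
      (F.genericSection X)) h

theorem bijective_unitsMap_centerToEndUnderForget (hJ : ∀ X : C, (⊥ : Sieve X) ∉ J X) :
    Function.Bijective (Units.map F.centerToEndUnderForget) := by
  refine ⟨Units.map_injective (F.centerToEndUnderForget_injective hJ), fun u => ?_⟩
  obtain ⟨x, hx⟩ := F.exists_centerToEndUnderForget_eq hJ u.val
    (injective_app_hom_app_of_comp_eq_id u.inv_val)
  obtain ⟨y, hy⟩ := F.exists_centerToEndUnderForget_eq hJ u.inv
    (injective_app_hom_app_of_comp_eq_id u.val_inv)
  have hxy : x * y = 1 :=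
    F.centerToEndUnderForget_injective hJ (by rw [map_mul, map_one, hx, hy, u.val_inv])
  have hyx : y * x = 1 :=
    F.centerToEndUnderForget_injective hJ (by rw [map_mul, map_one, hx, hy, u.inv_val])
  exact ⟨⟨x, y, hxy, hyx⟩, Units.ext hx⟩

end Subcanonical

end Sheaf

end CategoryTheory

/-- For a small subcanonical site `(C, J)` in which no object is covered
by the empty sieve, the covariant isotropy group of any sheaf `F`, i.e. the group of
natural automorphisms of the projection functor `F/Sh(C,J) ⥤ Sh(C,J)`, is isomorphic
to the group of natural automorphisms of the identity functor of `C`. -/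
theorem isotropy_of_sheaf_iso_aut_id {C : Type u} [SmallCategory C]
    (J : GrothendieckTopology C)
    (hsub : ∀ X : C, Presieve.IsSheaf J (yoneda.obj X))
    (hJ : ∀ X : C, (⊥ : Sieve X) ∉ J X)
    (F : Sheaf J (Type u)) :
    Nonempty (Aut (Under.forget F) ≃* Aut (𝟭 C)) := by
  have := GrothendieckTopology.Subcanonical.of_isSheaf_yoneda_obj J hsub
  exact ⟨(Aut.unitsEndEquivAut _).symm.trans <|
    (MulEquiv.ofBijective _ (F.bijective_unitsMap_centerToEndUnderForget hJ)).symm.trans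
      (Aut.unitsEndEquivAut _)⟩
end

section
/- Let (𝒞, J) be a small subcanonical site (objects are allowed to be covered by the empty sieve). Then for every J-sheaf F of sets, the covariant isotropy group of F in the category Sh(𝒞, J) of J-sheaves, i.e. the group Aut(Under.forget F) of natural automorphisms of the projection functor from the under category F/Sh(𝒞, J) to Sh(𝒞, J), is isomorphic as a group to Aut(𝟭_𝒞), the group of natural automorphisms of the identity functor of 𝒞. -/
/-!
An automorphism `θ` of `Under.forget F` is determined by its components at the coprojections
`F ⟶ F ⨿ G`. Naturality with respect to `𝟙 F ⟶ coprod.inl` says that such a component maps the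
summand `F` onto itself, so in an extensive category (such as a sheaf topos) it also maps the
complementary summand `G` onto itself; these restrictions are natural in `G` and form a unit of
the centre `End (𝟭 Sh(C, J))`, and every central unit arises this way by whiskering.

The centre of `Sh(C, J)` is that of `C` when `J` is subcanonical: restriction along the
fully faithful Yoneda embedding is injective because the representables are dense, and it is
surjective since a central element `z` of `C` acts on every presheaf `P` by `P.map (z.app X).op`.
-/

open CategoryTheory Limits Opposite

universe u

namespace CategoryTheory

section Extensive

variable {E : Type*} [Category E] [FinitaryExtensive E]

lemma FinitaryExtensive.exists_eq_comp_inr_of_isInitial {A B Z : E} (φ : Z ⟶ A ⨿ B)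
    (h : IsInitial (pullback coprod.inl φ)) : ∃ β : Z ⟶ B, φ = β ≫ coprod.inr := by
  -- universality of `A ⨿ B`: `Z` is the coproduct of its pullbacks along `inl` and `inr`
  have hcolim : Nonempty (IsColimit (BinaryCofan.mk (pullback.snd coprod.inl φ)
      (pullback.snd coprod.inr φ))) :=
    ((BinaryCofan.isVanKampen_iff (BinaryCofan.mk (coprod.inl : A ⟶ A ⨿ B) coprod.inr)).mp
      (FinitaryExtensive.van_kampen' _ (coprodIsCoprod A B)) (BinaryCofan.mk _ _) _ _ φ
      (pullback.condition (f := coprod.inl)) (pullback.condition (f := coprod.inr))).mpr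
      ⟨(IsPullback.of_hasPullback coprod.inl φ).flip,
        (IsPullback.of_hasPullback coprod.inr φ).flip⟩
  have : IsIso (pullback.snd coprod.inr φ) := (BinaryCofan.isColimit_iff_isIso_inr h _).mp hcolim
  exact ⟨inv (pullback.snd coprod.inr φ) ≫ pullback.fst coprod.inr φ, by simp [pullback.condition]⟩

lemma FinitaryExtensive.exists_inr_comp_eq {A B : E} (α : A ⨿ B ≅ A ⨿ B) (t : A ≅ A)
    (ht : coprod.inl ≫ α.hom = t.hom ≫ coprod.inl) :
    ∃ β : B ⟶ B, coprod.inr ≫ α.hom = β ≫ coprod.inr := by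
  have hdisj : IsPullback (initial.to A) (initial.to B) (coprod.inl : A ⟶ A ⨿ B) coprod.inr :=
    FinitaryExtensive.isPullback_initial_to_binaryCofan (colimit.isColimit (pair A B))
  have hinl : coprod.inl ≫ α.inv = t.inv ≫ coprod.inl := by
    rw [Iso.comp_inv_eq, Category.assoc, ht, Iso.inv_hom_id_assoc]
  -- `α⁻¹` maps the summand `A` into itself, so by disjointness `inr ≫ α` misses `A`
  have hP : IsInitial (pullback coprod.inl (coprod.inr ≫ α.hom)) := IsInitial.ofStrict
    (hdisj.lift (pullback.fst coprod.inl (coprod.inr ≫ α.hom) ≫ t.inv) (pullback.snd _ _)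
      (by rw [Category.assoc, ← hinl, ← Category.assoc, pullback.condition]; simp))
    initialIsInitial
  exact FinitaryExtensive.exists_eq_comp_inr_of_isInitial _ hP

end Extensive

namespace Under

variable {E : Type*} [Category E] {F : E}

lemma hom_comp_app (θ : Under.forget F ⟶ Under.forget F) (u : Under F) :
    u.hom ≫ θ.app u = θ.app (Under.mk (𝟙 F)) ≫ u.hom := by
  simpa using θ.naturality (Under.homMk (U := Under.mk (𝟙 F)) (V := u) u.hom (by simp))

variable [FinitaryExtensive E]

section

variable (θ θ' : Under.forget F ≅ Under.forget F)

noncomputable def appInl (G : E) : F ⨿ G ⟶ F ⨿ G :=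
  θ.hom.app (Under.mk coprod.inl)

lemma appInl_trans (G : E) : appInl (θ ≪≫ θ') G = appInl θ G ≫ appInl θ' G := rfl

lemma appInl_naturality {G H : E} (f : G ⟶ H) :
    coprod.map (𝟙 F) f ≫ appInl θ H = appInl θ G ≫ coprod.map (𝟙 F) f :=
  θ.hom.naturality (Under.homMk (U := Under.mk (coprod.inl : F ⟶ F ⨿ G))
    (V := Under.mk (coprod.inl : F ⟶ F ⨿ H)) (coprod.map (𝟙 F) f) (by simp))

noncomputable def inrComponent (G : E) : G ⟶ G :=
  (FinitaryExtensive.exists_inr_comp_eq (θ.app (Under.mk (coprod.inl : F ⟶ F ⨿ G)))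
    (θ.app (Under.mk (𝟙 F))) (hom_comp_app θ.hom (Under.mk coprod.inl))).choose

lemma inr_comp_appInl (G : E) : coprod.inr ≫ appInl θ G = inrComponent θ G ≫ coprod.inr :=
  (FinitaryExtensive.exists_inr_comp_eq (θ.app (Under.mk (coprod.inl : F ⟶ F ⨿ G)))
    (θ.app (Under.mk (𝟙 F))) (hom_comp_app θ.hom (Under.mk coprod.inl))).choose_spec

lemma inrComponent_eq {G : E} {β : G ⟶ G} (h : coprod.inr ≫ appInl θ G = β ≫ coprod.inr) :
    inrComponent θ G = β :=
  (cancel_mono coprod.inr).1 ((inr_comp_appInl θ G).symm.trans h)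

lemma inrComponent_naturality {G H : E} (f : G ⟶ H) :
    f ≫ inrComponent θ H = inrComponent θ G ≫ f := by
  rw [← cancel_mono (coprod.inr : H ⟶ F ⨿ H), Category.assoc, ← inr_comp_appInl,
    ← coprod.inr_map_assoc (𝟙 F), appInl_naturality, reassoc_of% inr_comp_appInl θ G,
    coprod.inr_map, Category.assoc]

lemma app_eq_inrComponent (u : Under F) : θ.hom.app u = inrComponent θ u.right := by
  -- `θ.hom.app u` has type `(forget F).obj u ⟶ _`, on which the coproduct lemmas do not rewrite
  suffices ∀ a : u.right ⟶ u.right, coprod.desc u.hom (𝟙 u.right) ≫ a =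
      appInl θ u.right ≫ coprod.desc u.hom (𝟙 u.right) → a = inrComponent θ u.right from
    this _ (θ.hom.naturality (Under.homMk (U := Under.mk (coprod.inl : F ⟶ F ⨿ u.right)) (V := u)
      (coprod.desc u.hom (𝟙 u.right)) (coprod.inl_desc _ _)))
  intro a ha
  have := coprod.inr ≫= ha
  rwa [coprod.inr_desc_assoc, Category.id_comp, reassoc_of% inr_comp_appInl θ u.right,
    coprod.inr_desc, Category.comp_id] at this

lemma inrComponent_refl (G : E) : inrComponent (Iso.refl (Under.forget F)) G = 𝟙 G :=
  inrComponent_eq _ (by simp [appInl])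

lemma inrComponent_trans (G : E) :
    inrComponent (θ ≪≫ θ') G = inrComponent θ G ≫ inrComponent θ' G :=
  inrComponent_eq _ (by rw [appInl_trans, reassoc_of% inr_comp_appInl θ G, inr_comp_appInl,
    Category.assoc])

end

variable (F)

noncomputable def autForgetToCatCenter : Aut (Under.forget F) →* CatCenter E where
  toFun θ := { app := inrComponent θ, naturality := fun _ _ f => inrComponent_naturality θ f }
  map_one' := CatCenter.ext _ _ inrComponent_refl
  map_mul' θ θ' := CatCenter.ext _ _ (inrComponent_trans θ' θ)

lemma autForgetToCatCenter_injective :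
    Function.Injective (autForgetToCatCenter F) := by
  intro θ θ' h
  ext u : 3
  exact (app_eq_inrComponent θ u).trans
    ((NatTrans.congr_app h u.right).trans (app_eq_inrComponent θ' u).symm)

lemma autForgetToCatCenter_whiskerLeft (z : Aut (𝟭 E)) :
    autForgetToCatCenter F (Functor.isoWhiskerLeft (Under.forget F) z) = z.hom :=
  CatCenter.ext _ _ fun _ => inrComponent_eq _ (z.hom.naturality coprod.inr)

noncomputable def autForgetMulEquiv : Aut (Under.forget F) ≃* (CatCenter E)ˣ :=
  MulEquiv.ofBijective (autForgetToCatCenter F).toHomUnits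
    ⟨fun _ _ h => autForgetToCatCenter_injective F (congrArg Units.val h),
      fun z => ⟨Functor.isoWhiskerLeft (Under.forget F) (Aut.unitsEndEquivAut _ z),
        Units.ext (autForgetToCatCenter_whiskerLeft F _)⟩⟩

end Under

namespace CatCenter

section Restrict

variable {D E : Type*} [Category D] [Category E] {i : D ⥤ E}

def restrict (hi : i.FullyFaithful) : CatCenter E →* CatCenter D where
  toFun z := (hi.whiskeringRight D).preimage (Functor.whiskerLeft i z)
  map_one' := by
    ext X
    exact hi.map_injective (by simp)
  map_mul' z w := by
    ext X
    exact hi.map_injective (by simp)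

lemma map_restrict_app (hi : i.FullyFaithful) (z : CatCenter E) (X : D) :
    i.map ((restrict hi z).app X) = z.app (i.obj X) :=
  hi.map_preimage _

end Restrict

def toPresheaf {C A : Type*} [Category C] [Category A] (z : CatCenter C) :
    CatCenter (Cᵒᵖ ⥤ A) :=
  (Functor.whiskeringLeft Cᵒᵖ Cᵒᵖ A).map (NatTrans.op z)

section Sheaf

variable {C : Type u} [SmallCategory C] (J : GrothendieckTopology C) [J.Subcanonical]

lemma toPresheaf_app_yoneda (z : CatCenter C) (X : C) :
    (toPresheaf z).app (yoneda.obj X) = yoneda.map (z.app X) := by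
  ext Y (g : Y.unop ⟶ X)
  simpa [toPresheaf] using (z.naturality g).symm

lemma ext_of_app_yoneda {z w : CatCenter (Sheaf J (Type u))}
    (h : ∀ X : C, z.app (J.yoneda.obj X) = w.app (J.yoneda.obj X)) : z = w := by
  ext G : 1
  apply Sheaf.hom_ext
  ext X x
  obtain ⟨f, rfl⟩ := (J.yonedaEquiv (X := X.unop)).surjective x
  change J.yonedaEquiv (f ≫ z.app G) = J.yonedaEquiv (f ≫ w.app G)
  rw [z.naturality, w.naturality, h]

lemma restrict_yoneda_injective : Function.Injective (restrict J.yonedaFullyFaithful) := by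
  intro z w hzw
  refine ext_of_app_yoneda J fun X => ?_
  rw [← map_restrict_app, hzw, map_restrict_app]

lemma restrict_yoneda_restrict_toPresheaf (z : CatCenter C) :
    restrict J.yonedaFullyFaithful
      (restrict (fullyFaithfulSheafToPresheaf J (Type u)) (toPresheaf z)) = z := by
  ext X
  apply J.yoneda.map_injective
  apply (sheafToPresheaf J (Type u)).map_injective
  rw [map_restrict_app, map_restrict_app]
  exact toPresheaf_app_yoneda z X

noncomputable def sheafMulEquiv : CatCenter (Sheaf J (Type u)) ≃* CatCenter C :=
  MulEquiv.ofBijective (restrict J.yonedaFullyFaithful)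
    ⟨restrict_yoneda_injective J, fun z => ⟨_, restrict_yoneda_restrict_toPresheaf J z⟩⟩

end Sheaf

end CatCenter

end CategoryTheory

/-- For a small subcanonical site `(C, J)` (objects may be covered by the
empty sieve), the covariant isotropy group of any sheaf `F`, i.e. the group of natural
automorphisms of the projection functor `F/Sh(C,J) ⥤ Sh(C,J)`, is isomorphic to the
group of natural automorphisms of the identity functor of `C`. -/
theorem isotropy_of_sheaf_iso_aut_id_subcanonical {C : Type u} [SmallCategory C]
    (J : GrothendieckTopology C)
    (hsub : ∀ X : C, Presieve.IsSheaf J (yoneda.obj X))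
    (F : Sheaf J (Type u)) :
    Nonempty (Aut (Under.forget F) ≃* Aut (𝟭 C)) := by
  have := GrothendieckTopology.Subcanonical.of_isSheaf_yoneda_obj J hsub
  exact ⟨(Under.autForgetMulEquiv F).trans
    ((Units.mapEquiv (CatCenter.sheafMulEquiv J)).trans (Aut.unitsEndEquivAut (𝟭 C)))⟩
end

section
/- Let (𝒞, J) be a small subcanonical site and let F be a J-sheaf of sets. The map sending each ψ ∈ Aut(𝟭_𝒞) to the family π^ψ, whose component at a sheaf morphism γ : F ⟶ G is the automorphism of G with component at each object C of 𝒞 given by G(ψ_C) : G(C) → G(C), is a well-defined group isomorphism from Aut(𝟭_𝒞) onto the covariant isotropy group Aut(Under.forget F) of F in Sh(𝒞, J). In particular, for every element π of the covariant isotropy group of F there is a unique ψ ∈ Aut(𝟭_𝒞) such that the component of π at any γ : F ⟶ G has component G(ψ_C) at each object C. -/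
/-!
For `X : C`, the sheafification of `F ⊔ yX`, viewed under `F`, is the free object of `Under F`
on a section at `X`: morphisms from it to `γ : F ⟶ G` are the elements of `G(X)`. An element `π`
of the isotropy group acts on this free object, and sends the generic section `1_X` to a section
which is locally either a point of `yX` or a section of `F`. The second case only happens over
objects covered by the empty sieve, where all sections agree; since `yX` is a sheaf, the image
of `1_X` is therefore a global point `ψ_X : X ⟶ X`. Naturality of `π` along the classifying maps
`F ⊔ yX ⟶ G` then forces `π_γ` to act by `G(ψ_X)`, and naturality and invertibility of `ψ`, as
well as its uniqueness, are read off from the same free objects.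
-/

open CategoryTheory Limits Opposite

universe u

theorem CategoryTheory.Presieve.IsSheaf.subsingleton_of_bot_mem_s6 {C : Type*} [Category C]
    {J : GrothendieckTopology C} {P : Cᵒᵖ ⥤ Type*} (hP : Presieve.IsSheaf J P) {U : C}
    (hU : (⊥ : Sieve U) ∈ J U) : Subsingleton (P.obj (op U)) :=
  ⟨fun _ _ => (hP _ hU).isSeparatedFor.ext fun _ _ hf => hf.elim⟩

theorem CategoryTheory.Presieve.IsSheaf.exists_app_eq_of_imageSieve_mem.{w} {C : Type*}
    [Category C] {J : GrothendieckTopology C} {P Q : Cᵒᵖ ⥤ Type w} (hP : Presieve.IsSheaf J P)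
    (hQ : Presieve.IsSeparated J Q) (m : P ⟶ Q) (hm : ∀ U, Function.Injective (m.app U))
    {X : C} (e : Q.obj (op X)) (he : Presheaf.imageSieve m e ∈ J X) :
    ∃ t, m.app (op X) t = e := by
  choose s hs using fun Y (f : Y ⟶ X) (hf : Presheaf.imageSieve m e f) => hf
  let x : Presieve.FamilyOfElements P (Presheaf.imageSieve m e).arrows := fun _ f hf => s _ f hf
  have hx : x.Compatible := by
    intro Y₁ Y₂ Z g₁ g₂ f₁ f₂ h₁ h₂ hcomm
    apply hm
    rw [NatTrans.naturality_apply, NatTrans.naturality_apply, hs, hs, ← Functor.map_comp_apply,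
      ← Functor.map_comp_apply, ← op_comp, ← op_comp, hcomm]
  obtain ⟨t, ht, -⟩ := hP _ he x hx
  refine ⟨t, (hQ _ he).ext fun Y f hf => ?_⟩
  rw [← NatTrans.naturality_apply, ht f hf, hs]

namespace CovariantIsotropy

variable {C : Type u} [SmallCategory C]

def sumYoneda (F : Cᵒᵖ ⥤ Type u) (X : C) : Cᵒᵖ ⥤ Type u where
  obj U := F.obj U ⊕ (unop U ⟶ X)
  map f := TypeCat.ofHom (Sum.map (F.map f) (f.unop ≫ ·))

namespace sumYoneda

variable {F G : Cᵒᵖ ⥤ Type u} {X : C}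

def inl : F ⟶ sumYoneda F X where
  app _ := TypeCat.ofHom Sum.inl

def inr : yoneda.obj X ⟶ sumYoneda F X where
  app _ := TypeCat.ofHom Sum.inr

def desc (α : F ⟶ G) (β : yoneda.obj X ⟶ G) : sumYoneda F X ⟶ G where
  app U := TypeCat.ofHom (Sum.elim (α.app U) (β.app U))
  naturality U V f := by
    ext (a | g)
    · exact NatTrans.naturality_apply α f a
    · exact NatTrans.naturality_apply β f g

@[simp]
theorem inl_desc (α : F ⟶ G) (β : yoneda.obj X ⟶ G) : inl ≫ desc α β = α := rfl

@[simp]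
theorem inr_desc (α : F ⟶ G) (β : yoneda.obj X ⟶ G) : inr ≫ desc α β = β := rfl

end sumYoneda

variable {J : GrothendieckTopology C} (F : Sheaf J (Type u))

noncomputable def freeUnder (X : C) : Under F :=
  Under.mk ⟨sumYoneda.inl ≫ toSheafify J (sumYoneda F.obj X)⟩

noncomputable def point (X : C) : yoneda.obj X ⟶ (freeUnder F X).right.obj :=
  sumYoneda.inr ≫ toSheafify J (sumYoneda F.obj X)

theorem freeUnder_isSheaf (X : C) : Presieve.IsSheaf J (freeUnder F X).right.obj :=
  (isSheaf_iff_isSheaf_of_type J _).1 (freeUnder F X).right.property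

variable {F}

theorem map_point {X U V : C} (f : V ⟶ U) (g : U ⟶ X) :
    (freeUnder F X).right.obj.map f.op ((point F X).app (op U) g) =
      (point F X).app (op V) (f ≫ g) :=
  (NatTrans.naturality_apply (point F X) f.op g).symm

theorem point_injective {X : C} (hX : Presieve.IsSheaf J (yoneda.obj X)) (U : Cᵒᵖ) :
    Function.Injective ((point F X).app U) := by
  intro g g' h
  have hT := Presheaf.equalizerSieve_mem (FD := TypeCat.Fun) J (toSheafify J (sumYoneda F.obj X))
    (Sum.inr g : (sumYoneda F.obj X).obj U) (Sum.inr g' : (sumYoneda F.obj X).obj U) h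
  refine (hX _ hT).isSeparatedFor.ext fun Y f hf => ?_
  have hf' : (Sum.inr (f ≫ g) : (sumYoneda F.obj X).obj (op Y)) = Sum.inr (f ≫ g') := hf
  exact Sum.inr_injective hf'

theorem bot_mem_of_point_eq {X U : C} {g : U ⟶ X} {a : F.obj.obj (op U)}
    (h : (point F X).app (op U) g = (freeUnder F X).hom.hom.app (op U) a) :
    (⊥ : Sieve U) ∈ J U := by
  have hT := Presheaf.equalizerSieve_mem (FD := TypeCat.Fun) J (toSheafify J (sumYoneda F.obj X))
    (Sum.inr g : (sumYoneda F.obj X).obj (op U)) (Sum.inl a : (sumYoneda F.obj X).obj (op U)) h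
  refine J.superset_covering (fun Y f hf => ?_) hT
  have hf' : (Sum.inr (f ≫ g) : (sumYoneda F.obj X).obj (op Y)) = Sum.inl (F.obj.map f.op a) := hf
  exact Sum.inr_ne_inl hf'

theorem exists_point_eq {X : C} (hX : Presieve.IsSheaf J (yoneda.obj X))
    (e : (freeUnder F X).right.obj.obj (op X))
    (he : ∀ (Y : C) (f : Y ⟶ X) (a : F.obj.obj (op Y)),
      (freeUnder F X).right.obj.map f.op e = (freeUnder F X).hom.hom.app (op Y) a →
        (⊥ : Sieve Y) ∈ J Y) :
    ∃ t, (point F X).app (op X) t = e := by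
  refine hX.exists_app_eq_of_imageSieve_mem (freeUnder_isSheaf F X).isSeparated _
    (point_injective hX) e (J.superset_covering ?_
      (Presheaf.imageSieve_mem J (toSheafify J (sumYoneda F.obj X)) e))
  rintro Y f ⟨a | g, hp⟩
  · have := (freeUnder_isSheaf F X).subsingleton_of_bot_mem_s6 (he Y f a hp.symm)
    exact ⟨f, Subsingleton.elim _ _⟩
  · exact ⟨g, hp⟩

noncomputable def freeUnder.desc {X : C} (g : Under F) (x : g.right.obj.obj (op X)) :
    freeUnder F X ⟶ g :=
  Under.homMk ⟨sheafifyLift J (sumYoneda.desc g.hom.hom (yonedaEquiv.symm x)) g.right.property⟩ (by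
    apply Sheaf.hom_ext
    simp [freeUnder])

theorem freeUnder.desc_point {X U : C} (g : Under F) (x : g.right.obj.obj (op X)) (f : U ⟶ X) :
    (freeUnder.desc g x).right.hom.app (op U) ((point F X).app (op U) f) =
      g.right.obj.map f.op x := by
  change (sumYoneda.inr ≫ toSheafify J _ ≫
    sheafifyLift J (sumYoneda.desc g.hom.hom (yonedaEquiv.symm x)) g.right.property).app (op U) f = _
  rw [toSheafify_sheafifyLift, sumYoneda.inr_desc]
  rfl

def isotropyApp (π : Under.forget F ⟶ Under.forget F) (g : Under F) :
    g.right.obj ⟶ g.right.obj :=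
  (π.app g).hom

theorem isotropyApp_naturality_apply (π : Under.forget F ⟶ Under.forget F) {g h : Under F}
    (d : g ⟶ h) (U : Cᵒᵖ) (x : g.right.obj.obj U) :
    (isotropyApp π h).app U (d.right.hom.app U x) =
      d.right.hom.app U ((isotropyApp π g).app U x) :=
  congrArg (fun φ => φ.hom.app U x) (π.naturality d)

theorem isotropyApp_hom_inv_apply (π : Under.forget F ≅ Under.forget F) (g : Under F) (U : Cᵒᵖ)
    (x : g.right.obj.obj U) :
    (isotropyApp π.inv g).app U ((isotropyApp π.hom g).app U x) = x :=
  congrArg (fun φ => φ.hom.app U x) (π.hom_inv_id_app g)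

section ofIsotropy

variable (π : Under.forget F ≅ Under.forget F)

theorem exists_app_point_id_eq_point {X : C} (hX : Presieve.IsSheaf J (yoneda.obj X)) :
    ∃ ψ : X ⟶ X, (isotropyApp π.hom (freeUnder F X)).app (op X) ((point F X).app (op X) (𝟙 X)) =
      (point F X).app (op X) ψ := by
  refine (exists_point_eq hX _ ?_).imp fun _ h => h.symm
  intro Y f a ha
  refine bot_mem_of_point_eq (g := f) (a := (isotropyApp π.inv (Under.mk (𝟙 F))).app (op Y) a) ?_
  -- Pulling back along `π⁻¹`, the point `f` itself would lie in `F`.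
  let θ := isotropyApp π.hom (freeUnder F X)
  let θ' := isotropyApp π.inv (freeUnder F X)
  let e := (point F X).app (op X) (𝟙 X)
  calc (point F X).app (op Y) f
      = (freeUnder F X).right.obj.map f.op e := by rw [map_point, Category.comp_id]
    _ = (freeUnder F X).right.obj.map f.op (θ'.app (op X) (θ.app (op X) e)) := by
        rw [isotropyApp_hom_inv_apply]
    _ = θ'.app (op Y) ((freeUnder F X).right.obj.map f.op (θ.app (op X) e)) :=
        (NatTrans.naturality_apply θ' f.op _).symm
    _ = θ'.app (op Y) ((freeUnder F X).hom.hom.app (op Y) a) := by rw [ha]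
    _ = (freeUnder F X).hom.hom.app (op Y) ((isotropyApp π.inv (Under.mk (𝟙 F))).app (op Y) a) :=
        isotropyApp_naturality_apply π.inv
          (Under.homMk (freeUnder F X).hom : Under.mk (𝟙 F) ⟶ freeUnder F X) (op Y) a

variable (hsub : ∀ X : C, Presieve.IsSheaf J (yoneda.obj X))

noncomputable def ofIsotropyApp (X : C) : X ⟶ X :=
  (exists_app_point_id_eq_point π (hsub X)).choose

theorem app_point_id (X : C) :
    (isotropyApp π.hom (freeUnder F X)).app (op X) ((point F X).app (op X) (𝟙 X)) =
      (point F X).app (op X) (ofIsotropyApp π hsub X) :=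
  (exists_app_point_id_eq_point π (hsub X)).choose_spec

theorem isotropyApp_apply (g : Under F) (X : C) (x : g.right.obj.obj (op X)) :
    (isotropyApp π.hom g).app (op X) x = g.right.obj.map (ofIsotropyApp π hsub X).op x := by
  let d := freeUnder.desc g x
  have hx : x = d.right.hom.app (op X) ((point F X).app (op X) (𝟙 X)) := by
    rw [freeUnder.desc_point]; simp
  conv_lhs => rw [hx]
  rw [isotropyApp_naturality_apply, app_point_id, freeUnder.desc_point]

theorem app_point {X U : C} (f : U ⟶ X) :
    (isotropyApp π.hom (freeUnder F X)).app (op U) ((point F X).app (op U) f) =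
      (point F X).app (op U) (f ≫ ofIsotropyApp π hsub X) := by
  rw [← Category.comp_id f, ← map_point, NatTrans.naturality_apply, app_point_id, map_point,
    Category.comp_id]

theorem ofIsotropyApp_naturality {W X : C} (f : W ⟶ X) :
    f ≫ ofIsotropyApp π hsub X = ofIsotropyApp π hsub W ≫ f := by
  apply point_injective (hsub X) (op W)
  rw [← app_point, isotropyApp_apply, map_point]

theorem ofIsotropyApp_symm_comp (X : C) :
    ofIsotropyApp π.symm hsub X ≫ ofIsotropyApp π hsub X = 𝟙 X := by
  apply point_injective (hsub X) (op X)
  rw [← map_point, ← app_point_id, ← isotropyApp_apply π.symm hsub]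
  exact isotropyApp_hom_inv_apply π _ _ _

noncomputable def ofIsotropy : Aut (𝟭 C) :=
  NatIso.ofComponents
    (fun X => ⟨ofIsotropyApp π hsub X, ofIsotropyApp π.symm hsub X,
      by simpa using ofIsotropyApp_symm_comp π.symm hsub X, ofIsotropyApp_symm_comp π hsub X⟩)
    (ofIsotropyApp_naturality π hsub)

end ofIsotropy

variable (F) in
def isotropyEnd (σ : 𝟭 C ⟶ 𝟭 C) : Under.forget F ⟶ Under.forget F where
  app g := ⟨Functor.whiskerRight (NatTrans.op σ) g.right.obj⟩
  naturality g h d := by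
    ext U x
    exact (NatTrans.naturality_apply d.right.hom _ x).symm

theorem isotropyEnd_id : isotropyEnd F (𝟙 (𝟭 C)) = 𝟙 _ := by
  ext g U x
  simp [isotropyEnd]

theorem isotropyEnd_comp (σ τ : 𝟭 C ⟶ 𝟭 C) :
    isotropyEnd F (σ ≫ τ) = isotropyEnd F τ ≫ isotropyEnd F σ := by
  ext g U x
  simp [isotropyEnd]

theorem isotropyEnd_injective (hsub : ∀ X : C, Presieve.IsSheaf J (yoneda.obj X)) :
    Function.Injective (isotropyEnd F) := by
  intro σ τ h
  ext X
  apply point_injective (F := F) (hsub X) (op X)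
  have := congrArg
    (fun π => (π.app (freeUnder F X)).hom.app (op X) ((point F X).app (op X) (𝟙 X))) h
  have h1 := map_point (F := F) (X := X) (U := X) (V := X) (σ.app X) (𝟙 X)
  have h2 := map_point (F := F) (X := X) (U := X) (V := X) (τ.app X) (𝟙 X)
  simp only [Category.comp_id] at h1 h2
  exact h1.symm.trans (this.trans h2)

theorem eq_isotropyEnd {π : Under.forget F ⟶ Under.forget F} {σ : 𝟭 C ⟶ 𝟭 C}
    (h : ∀ (g : Under F) (X : C), (π.app g).hom.app (op X) = g.right.obj.map (σ.app X).op) :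
    π = isotropyEnd F σ := by
  ext g : 2
  apply Sheaf.hom_ext
  ext U : 2
  exact h g U.unop

theorem hom_eq_isotropyEnd_ofIsotropy (π : Under.forget F ≅ Under.forget F)
    (hsub : ∀ X : C, Presieve.IsSheaf J (yoneda.obj X)) :
    π.hom = isotropyEnd F (ofIsotropy π hsub).hom :=
  eq_isotropyEnd fun g X => by ext x; exact isotropyApp_apply π hsub g X x

variable (F) in
def isotropyHom : Aut (𝟭 C) →* Aut (Under.forget F) where
  toFun ψ :=
    { hom := isotropyEnd F ψ.hom
      inv := isotropyEnd F ψ.inv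
      hom_inv_id := by rw [← isotropyEnd_comp, ψ.inv_hom_id, isotropyEnd_id]
      inv_hom_id := by rw [← isotropyEnd_comp, ψ.hom_inv_id, isotropyEnd_id] }
  map_one' := Iso.ext isotropyEnd_id
  map_mul' ψ φ := Iso.ext <| by
    change isotropyEnd F (φ.hom ≫ ψ.hom) = isotropyEnd F φ.hom ≫ isotropyEnd F ψ.hom
    rw [NatTrans.id_comm, isotropyEnd_comp]

end CovariantIsotropy

open CovariantIsotropy

/-- For a small subcanonical site `(C, J)` and a sheaf `F`, the map
sending `ψ ∈ Aut (𝟭 C)` to the family whose component at a sheaf morphism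
`γ : F ⟶ G` is the automorphism of `G` with component `G(ψ_C)` at each object `C`
is a well-defined group isomorphism from `Aut (𝟭 C)` onto the covariant isotropy
group `Aut (Under.forget F)`; in particular every element `π` of the covariant
isotropy group arises in this way from a unique `ψ ∈ Aut (𝟭 C)`. -/
theorem isotropy_of_sheaf_explicit_iso {C : Type u} [SmallCategory C]
    (J : GrothendieckTopology C)
    (hsub : ∀ X : C, Presieve.IsSheaf J (yoneda.obj X))
    (F : Sheaf J (Type u)) :
    (∃ e : Aut (𝟭 C) ≃* Aut (Under.forget F),
        ∀ (ψ : Aut (𝟭 C)) (g : Under F) (C₀ : C),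
          ((e ψ).hom.app g).hom.app (op C₀) = g.right.val.map (ψ.hom.app C₀).op) ∧
    (∀ π : Aut (Under.forget F), ∃! ψ : Aut (𝟭 C),
        ∀ (g : Under F) (C₀ : C),
          (π.hom.app g).hom.app (op C₀) = g.right.val.map (ψ.hom.app C₀).op) := by
  have hbij : Function.Bijective (isotropyHom F) :=
    ⟨fun ψ φ h => Iso.ext (isotropyEnd_injective hsub (congrArg Iso.hom h)),
      fun π => ⟨ofIsotropy π hsub, Iso.ext (hom_eq_isotropyEnd_ofIsotropy π hsub).symm⟩⟩
  refine ⟨⟨MulEquiv.ofBijective (isotropyHom F) hbij, fun _ _ _ => rfl⟩, fun π =>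
    ⟨ofIsotropy π hsub, fun g X => ?_, fun ψ hψ => Iso.ext ?_⟩⟩
  · exact congrArg (fun τ => (τ.app g).hom.app (op X)) (hom_eq_isotropyEnd_ofIsotropy π hsub)
  · exact isotropyEnd_injective hsub
      ((eq_isotropyEnd hψ).symm.trans (hom_eq_isotropyEnd_ofIsotropy π hsub))
end

section
/- Let (𝒞, J) be a small subcanonical site and let F be a J-sheaf of sets. A natural endomorphism γ : F ⟶ F is an inner automorphism of F (i.e., there exists an element π of the covariant isotropy group Aut(Under.forget F) of F with component at the identity morphism id_F equal to γ) if and only if there exists ψ ∈ Aut(𝟭_𝒞) with γ_C = F(ψ_C) for every object C of 𝒞. -/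
/-!
The isotropy element `π` is determined by what it does on coproducts `F ⨿ Y` under `inl`:
naturality along `F ⟶ F ⨿ Y` makes `π_inl` preserve the summand `F`, and in an extensive
category an automorphism of `F ⨿ Y` preserving one summand also preserves the complementary
one. The induced automorphisms of the summands `Y` form a natural automorphism `Ψ` of the
identity of the whole category, and naturality along `[𝟙, a] : F ⨿ Y ⟶ F` gives
`a ≫ π_{𝟙 F} = Ψ_Y ≫ a`, so `π_{𝟙 F} = Ψ_F`. Conversely every `Ψ ∈ Aut (𝟭)` restricts to the
under category. For sheaves, `Aut (𝟭 C)` and `Aut (𝟭 (Sheaf J (Type u)))` correspond: restrict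
along the fully faithful Yoneda embedding (this is where subcanonicity enters), and extend by
`P ↦ P.map ψ.op` on presheaves and restrict to the full subcategory of sheaves.
-/

open CategoryTheory Limits Opposite

universe u v

namespace CategoryTheory

noncomputable def Functor.restrictAutId {D E : Type*} [Category* D] [Category* E] (L : D ⥤ E)
    [L.Full] [L.Faithful] (Ψ : 𝟭 E ≅ 𝟭 E) : 𝟭 D ≅ 𝟭 D :=
  fullyFaithfulCancelRight L (isoWhiskerLeft L Ψ)

@[simp]
lemma Functor.map_restrictAutId_hom_app {D E : Type*} [Category* D] [Category* E] (L : D ⥤ E)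
    [L.Full] [L.Faithful] (Ψ : 𝟭 E ≅ 𝟭 E) (X : D) :
    L.map ((L.restrictAutId Ψ).hom.app X) = Ψ.hom.app (L.obj X) := by
  simp only [Functor.restrictAutId, fullyFaithfulCancelRight_hom_app, Functor.map_preimage]
  rfl

def autIdPresheaf {C : Type*} [Category* C] (A : Type*) [Category* A] (ψ : 𝟭 C ≅ 𝟭 C) :
    𝟭 (Cᵒᵖ ⥤ A) ≅ 𝟭 (Cᵒᵖ ⥤ A) :=
  (Functor.whiskeringLeft Cᵒᵖ Cᵒᵖ A).mapIso (NatIso.op ψ)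

@[simp]
lemma autIdPresheaf_hom_app_app {C : Type*} [Category* C] (A : Type*) [Category* A]
    (ψ : 𝟭 C ≅ 𝟭 C) (P : Cᵒᵖ ⥤ A) (c : Cᵒᵖ) :
    ((autIdPresheaf A ψ).hom.app P).app c = P.map (ψ.hom.app c.unop).op :=
  rfl

namespace FinitaryExtensive

variable {D : Type*} [Category* D] [FinitaryExtensive D]

lemma exists_comp_inr_eq_of_isInitial_pullback_inl {X Y Z : D} (t : Z ⟶ X ⨿ Y)
    (h : IsInitial (pullback t coprod.inl)) : ∃ w : Z ⟶ Y, w ≫ coprod.inr = t := by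
  let c : BinaryCofan (pullback t (coprod.inl : X ⟶ _)) (pullback t (coprod.inr : Y ⟶ _)) :=
    BinaryCofan.mk (pullback.fst _ _) (pullback.fst _ _)
  have hc : Nonempty (IsColimit c) := by
    rw [(BinaryCofan.isVanKampen_iff _).mp (vanKampen _ (coprodIsCoprod X Y)) c
      (pullback.snd t coprod.inl) (pullback.snd t coprod.inr) t
      (pullback.condition (f := t) (g := coprod.inl)).symm
      (pullback.condition (f := t) (g := coprod.inr)).symm]
    exact ⟨IsPullback.of_hasPullback t coprod.inl, IsPullback.of_hasPullback t coprod.inr⟩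
  have : IsIso (pullback.fst t (coprod.inr : Y ⟶ _)) :=
    (BinaryCofan.isColimit_iff_isIso_inr h c).mp hc
  exact ⟨inv (pullback.fst t coprod.inr) ≫ pullback.snd t coprod.inr, by
    rw [Category.assoc, ← pullback.condition, IsIso.inv_hom_id_assoc]⟩

lemma exists_inr_comp_hom_eq_comp_inr {X Y : D} (θ : X ⨿ Y ≅ X ⨿ Y) (g : X ⟶ X)
    (h : coprod.inl ≫ θ.inv = g ≫ coprod.inl) :
    ∃ w : Y ⟶ Y, coprod.inr ≫ θ.hom = w ≫ coprod.inr := by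
  set t : Y ⟶ X ⨿ Y := coprod.inr ≫ θ.hom
  -- `θ⁻¹` maps the part of `Y` lying over `X` into both `X` and `Y`, which are disjoint.
  have hsq : (pullback.snd t coprod.inl ≫ g) ≫ coprod.inl =
      pullback.fst t coprod.inl ≫ coprod.inr := by
    simpa [t, ← h] using ((pullback.condition (f := t) (g := coprod.inl)) =≫ θ.inv).symm
  have hI : IsInitial (pullback t (coprod.inl : X ⟶ _)) := IsInitial.ofStrict
    ((isPullback_initial_to_binaryCofan (coprodIsCoprod X Y)).lift _ _ hsq) initialIsInitial
  obtain ⟨w, hw⟩ := exists_comp_inr_eq_of_isInitial_pullback_inl t hI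
  exact ⟨w, hw.symm⟩

lemma exists_iso_inr_comp_hom_eq_comp_inr {X Y : D} (θ : X ⨿ Y ≅ X ⨿ Y) (g g' : X ⟶ X)
    (h : coprod.inl ≫ θ.hom = g ≫ coprod.inl) (h' : coprod.inl ≫ θ.inv = g' ≫ coprod.inl) :
    ∃ w : Y ≅ Y, coprod.inr ≫ θ.hom = w.hom ≫ coprod.inr := by
  obtain ⟨w, hw⟩ := exists_inr_comp_hom_eq_comp_inr θ g' h'
  obtain ⟨w', hw'⟩ : ∃ w' : Y ⟶ Y, coprod.inr ≫ θ.inv = w' ≫ coprod.inr :=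
    exists_inr_comp_hom_eq_comp_inr θ.symm g h
  refine ⟨⟨w, w', ?_, ?_⟩, hw⟩
  · rw [← cancel_mono (coprod.inr : Y ⟶ X ⨿ Y), Category.assoc, ← hw', ← reassoc_of% hw]
    simp
  · rw [← cancel_mono (coprod.inr : Y ⟶ X ⨿ Y), Category.assoc, ← hw, ← reassoc_of% hw']
    simp

end FinitaryExtensive

section Isotropy

variable {D : Type*} [Category* D] {F : D}

def isotropyIso (π : Under.forget F ≅ Under.forget F) {G : D} (f : F ⟶ G) : G ≅ G :=
  π.app (Under.mk f)

lemma isotropyIso_hom_naturality (π : Under.forget F ≅ Under.forget F) {G G' : D} (f : F ⟶ G)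
    {f' : F ⟶ G'} (g : G ⟶ G') (hg : f ≫ g = f') :
    g ≫ (isotropyIso π f').hom = (isotropyIso π f).hom ≫ g :=
  π.hom.naturality (Under.homMk (U := Under.mk f) (V := Under.mk f') g hg)

lemma isotropyIso_inv_naturality (π : Under.forget F ≅ Under.forget F) {G G' : D} (f : F ⟶ G)
    {f' : F ⟶ G'} (g : G ⟶ G') (hg : f ≫ g = f') :
    g ≫ (isotropyIso π f').inv = (isotropyIso π f).inv ≫ g :=
  π.inv.naturality (Under.homMk (U := Under.mk f) (V := Under.mk f') g hg)

variable [FinitaryExtensive D]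

lemma exists_iso_inr_comp_isotropyIso_hom (π : Under.forget F ≅ Under.forget F) (Y : D) :
    ∃ w : Y ≅ Y, coprod.inr ≫ (isotropyIso π (coprod.inl : F ⟶ F ⨿ Y)).hom =
      w.hom ≫ coprod.inr :=
  FinitaryExtensive.exists_iso_inr_comp_hom_eq_comp_inr _ _ _
    (isotropyIso_hom_naturality π (𝟙 F) _ (Category.id_comp _))
    (isotropyIso_inv_naturality π (𝟙 F) _ (Category.id_comp _))

noncomputable def autIdOfIsotropy (π : Under.forget F ≅ Under.forget F) : 𝟭 D ≅ 𝟭 D :=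
  NatIso.ofComponents (fun Y => (exists_iso_inr_comp_isotropyIso_hom π Y).choose)
    fun {Y Y'} h => by
      have hw := (exists_iso_inr_comp_isotropyIso_hom π Y).choose_spec
      have hw' := (exists_iso_inr_comp_isotropyIso_hom π Y').choose_spec
      have hθ := isotropyIso_hom_naturality π (coprod.inl : F ⟶ F ⨿ Y)
        (f' := coprod.inl) (coprod.map (𝟙 F) h) (by simp)
      rw [← cancel_mono (coprod.inr : Y' ⟶ F ⨿ Y')]
      simp only [Functor.id_map, Category.assoc, ← hw']
      rw [← coprod.inr_map_assoc (𝟙 F) h, hθ, reassoc_of% hw, coprod.inr_map]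

lemma inr_comp_isotropyIso_hom (π : Under.forget F ≅ Under.forget F) (Y : D) :
    coprod.inr ≫ (isotropyIso π (coprod.inl : F ⟶ F ⨿ Y)).hom =
      (autIdOfIsotropy π).hom.app Y ≫ coprod.inr :=
  (exists_iso_inr_comp_isotropyIso_hom π Y).choose_spec

lemma comp_isotropyIso_id_hom (π : Under.forget F ≅ Under.forget F) {Y : D} (a : Y ⟶ F) :
    a ≫ (isotropyIso π (𝟙 F)).hom = (autIdOfIsotropy π).hom.app Y ≫ a := by
  have hθ := isotropyIso_hom_naturality π coprod.inl (coprod.desc (𝟙 F) a) (coprod.inl_desc _ _)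
  rw [← coprod.inr_desc (𝟙 F) a, Category.assoc, hθ, reassoc_of% inr_comp_isotropyIso_hom]

theorem exists_isotropy_hom_app_eq_iff (γ : F ⟶ F) :
    (∃ π : Under.forget F ≅ Under.forget F, π.hom.app (Under.mk (𝟙 F)) = γ) ↔
      ∃ Ψ : 𝟭 D ≅ 𝟭 D, Ψ.hom.app F = γ := by
  constructor
  · rintro ⟨π, rfl⟩
    refine ⟨autIdOfIsotropy π, ?_⟩
    have h := comp_isotropyIso_id_hom π (𝟙 F)
    simp only [Functor.id_obj, Category.id_comp, Category.comp_id] at h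
    exact h.symm
  · rintro ⟨Ψ, rfl⟩
    exact ⟨Functor.isoWhiskerLeft (Under.forget F) Ψ, rfl⟩

end Isotropy

namespace GrothendieckTopology

variable {C : Type*} [Category.{v} C] (J : GrothendieckTopology C)

lemma autId_hom_app_app [J.Subcanonical] (Ψ : 𝟭 (Sheaf J (Type v)) ≅ 𝟭 _)
    (F : Sheaf J (Type v)) (X : C) :
    (Ψ.hom.app F).hom.app (op X) = F.obj.map ((J.yoneda.restrictAutId Ψ).hom.app X).op := by
  ext s
  obtain ⟨a, rfl⟩ := J.yonedaEquiv.surjective s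
  have ha : a ≫ Ψ.hom.app F = J.yoneda.map ((J.yoneda.restrictAutId Ψ).hom.app X) ≫ a := by
    rw [Functor.map_restrictAutId_hom_app]
    exact Ψ.hom.naturality a
  show (Ψ.hom.app F).hom.app (op X) (J.yonedaEquiv a) = F.obj.map _ (J.yonedaEquiv a)
  rw [yonedaEquiv_naturality, ← ha, yonedaEquiv_comp]
  rfl

end GrothendieckTopology

end CategoryTheory

/-- For a small subcanonical site `(C, J)` and a sheaf `F`, a natural
endomorphism `γ : F ⟶ F` is an inner automorphism of `F` (i.e. the component at
`𝟙 F` of some element of the covariant isotropy group of `F`) iff there exists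
`ψ ∈ Aut (𝟭 C)` with `γ_C = F(ψ_C)` for every object `C`. -/
theorem inner_automorphism_iff {C : Type u} [SmallCategory C]
    (J : GrothendieckTopology C)
    (hsub : ∀ X : C, Presieve.IsSheaf J (yoneda.obj X))
    (F : Sheaf J (Type u)) (γ : F ⟶ F) :
    (∃ π : Aut (Under.forget F), π.hom.app (Under.mk (𝟙 F)) = γ) ↔
    (∃ ψ : Aut (𝟭 C), ∀ C₀ : C,
        γ.hom.app (op C₀) = F.obj.map (ψ.hom.app C₀).op) := by
  have := GrothendieckTopology.Subcanonical.of_isSheaf_yoneda_obj J hsub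
  refine (exists_isotropy_hom_app_eq_iff γ).trans ⟨?_, ?_⟩
  · rintro ⟨Ψ, rfl⟩
    exact ⟨J.yoneda.restrictAutId Ψ, J.autId_hom_app_app Ψ F⟩
  · rintro ⟨ψ, hψ⟩
    refine ⟨(sheafToPresheaf J _).restrictAutId (autIdPresheaf _ ψ),
      Sheaf.hom_ext (NatTrans.ext (funext fun X => ?_))⟩
    exact (congrArg (fun τ : F.obj ⟶ F.obj => τ.app X)
      ((sheafToPresheaf J _).map_restrictAutId_hom_app (autIdPresheaf _ ψ) F)).trans
      (hψ X.unop).symm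
end

section
/- Let (𝒞, J) be an arbitrary small site and let ay𝒞 denote the full subcategory of Sh(𝒞, J) on those sheaves isomorphic to the sheafification of a representable presheaf 𝒞(−, C) for some object C of 𝒞. Then for every J-sheaf F of sets, the covariant isotropy group of F in Sh(𝒞, J), i.e. the group Aut(Under.forget F) of natural automorphisms of the projection functor from the under category F/Sh(𝒞, J) to Sh(𝒞, J), is isomorphic as a group to Aut(𝟭_{ay𝒞}), the group of natural automorphisms of the identity functor of ay𝒞. -/
open CategoryTheory Limits Opposite

universe u

/-!
Sheaf toposes are extensive. In an extensive category `E`, an automorphism `α` of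
`Under.forget F` restricts, at the object `F ⟶ F ⨿ G`, to an automorphism `θ_G` of the summand
`G`: the part of `G` that `α` sends into `F` is disjoint from `F` after applying `α⁻¹`, hence
initial. Naturality in the maps `F ⨿ G ⟶ F ⨿ G'` makes `θ` an automorphism of `𝟭 E`, and
naturality along `[X.hom, 𝟙] : F ⨿ X ⟶ X` shows `α_X = θ_X`, so
`Aut (Under.forget F) ≃* Aut (𝟭 E)`.

The sheafified representables `a(y c)` form a dense full subcategory of `Sh(C, J)`, because
`(a(y c) ⟶ G) ≃ G(c)`. Since `𝟭` is the left Kan extension of a dense functor along itself,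
automorphisms of `𝟭` restrict bijectively to a dense full subcategory.
-/

namespace CategoryTheory

section Extensive

variable {E : Type*} [Category E] [FinitaryExtensive E]

lemma nonempty_isColimit_binaryCofan_pullback_fst {X Y Z : E} (m : Z ⟶ X ⨿ Y) :
    Nonempty (IsColimit
      (BinaryCofan.mk (pullback.fst m coprod.inl) (pullback.fst m coprod.inr))) := by
  refine FinitaryPreExtensive.universal' _ (coprodIsCoprod X Y) _
    (mapPair (pullback.snd m (coprod.inl : X ⟶ X ⨿ Y))
      (pullback.snd m (coprod.inr : Y ⟶ X ⨿ Y))) m ?_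
    (NatTrans.Equifibered.of_discrete _) ?_
  · ext ⟨⟨⟩⟩
    exacts [(pullback.condition (f := m) (g := coprod.inl)).symm,
      (pullback.condition (f := m) (g := coprod.inr)).symm]
  · rintro ⟨⟨⟩⟩
    exacts [IsPullback.of_hasPullback m coprod.inl, IsPullback.of_hasPullback m coprod.inr]

lemma exists_eq_comp_inr_of_isInitial_pullback {X Y Z : E} (m : Z ⟶ X ⨿ Y)
    (h : IsInitial (pullback m coprod.inl)) : ∃ θ : Z ⟶ Y, m = θ ≫ coprod.inr := by
  obtain ⟨hc⟩ := nonempty_isColimit_binaryCofan_pullback_fst m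
  have : IsIso (pullback.fst m coprod.inr) := (BinaryCofan.isColimit_iff_isIso_inr h _).mp ⟨hc⟩
  exact ⟨inv (pullback.fst m coprod.inr) ≫ pullback.snd m coprod.inr,
    by simp [pullback.condition]⟩

end Extensive

namespace Under

variable {E : Type*} [Category E] {F : E}

/- `appMk`, `appRight` and `appCoprod` are components of `σ` typed with objects of `E` (`F`,
`X.right`, `F ⨿ G`) instead of `(Under.forget F).obj _`, so that coproduct lemmas rewrite them. -/
noncomputable def appMk (σ : Under.forget F ⟶ Under.forget F) : F ⟶ F :=
  σ.app (Under.mk (𝟙 F))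

noncomputable def appRight (σ : Under.forget F ⟶ Under.forget F) (X : Under F) :
    X.right ⟶ X.right :=
  σ.app X

lemma hom_comp_app_s8 (σ : Under.forget F ⟶ Under.forget F) (X : Under F) :
    X.hom ≫ σ.app X = appMk σ ≫ X.hom :=
  σ.naturality (Under.homMk X.hom (by simp) : Under.mk (𝟙 F) ⟶ X)

variable [FinitaryExtensive E]

variable (F) in
noncomputable abbrev coprodInl (G : E) : Under F := Under.mk (coprod.inl : F ⟶ F ⨿ G)

noncomputable def appCoprod (σ : Under.forget F ⟶ Under.forget F) (G : E) :
    F ⨿ G ⟶ F ⨿ G :=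
  σ.app (coprodInl F G)

lemma exists_inr_comp_appCoprod_eq (α : Under.forget F ≅ Under.forget F) (G : E) :
    ∃ θ : G ⟶ G, coprod.inr ≫ appCoprod α.hom G = θ ≫ coprod.inr := by
  let m : G ⟶ F ⨿ G := coprod.inr ≫ appCoprod α.hom G
  refine exists_eq_comp_inr_of_isInitial_pullback m ?_
  have hα : appCoprod α.hom G ≫ appCoprod α.inv G = 𝟙 _ := α.hom_inv_id_app _
  have hF : coprod.inl ≫ appCoprod α.inv G = appMk α.inv ≫ coprod.inl :=
    hom_comp_app_s8 α.inv (coprodInl F G)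
  -- composing the pullback square with `α⁻¹`, which maps the summand `F` into itself
  have h : (pullback.snd m coprod.inl ≫ appMk α.inv) ≫ coprod.inl =
      pullback.fst m coprod.inl ≫ coprod.inr := by
    calc (pullback.snd m coprod.inl ≫ appMk α.inv) ≫ coprod.inl
        = pullback.fst m coprod.inl ≫ m ≫ appCoprod α.inv G := by
          rw [pullback.condition_assoc, hF, Category.assoc]
      _ = pullback.fst m coprod.inl ≫ coprod.inr := by simp [m, hα]
  exact .ofStrict (pullback.lift _ _ h) .ofBinaryCoproductDisjoint

noncomputable def isotropyApp (α : Under.forget F ≅ Under.forget F) (G : E) : G ⟶ G :=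
  (exists_inr_comp_appCoprod_eq α G).choose

lemma inr_comp_appCoprod (α : Under.forget F ≅ Under.forget F) (G : E) :
    coprod.inr ≫ appCoprod α.hom G = isotropyApp α G ≫ coprod.inr :=
  (exists_inr_comp_appCoprod_eq α G).choose_spec

lemma isotropyApp_eq {α : Under.forget F ≅ Under.forget F} {G : E} {θ : G ⟶ G}
    (h : coprod.inr ≫ appCoprod α.hom G = θ ≫ coprod.inr) : isotropyApp α G = θ :=
  (cancel_mono coprod.inr).mp ((inr_comp_appCoprod α G).symm.trans h)

lemma isotropyApp_naturality (α : Under.forget F ≅ Under.forget F) {G G' : E} (g : G ⟶ G') :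
    g ≫ isotropyApp α G' = isotropyApp α G ≫ g := by
  have h : coprod.map (𝟙 F) g ≫ appCoprod α.hom G' =
      appCoprod α.hom G ≫ coprod.map (𝟙 F) g :=
    α.hom.naturality
      (Under.homMk (coprod.map (𝟙 F) g) (by simp) : coprodInl F G ⟶ coprodInl F G')
  have h' := coprod.inr ≫= h
  rw [coprod.inr_map_assoc, inr_comp_appCoprod, reassoc_of% (inr_comp_appCoprod α G),
    coprod.inr_map] at h'
  exact (cancel_mono coprod.inr).mp (by simpa only [Category.assoc] using h')

lemma isotropyApp_trans (α β : Under.forget F ≅ Under.forget F) (G : E) :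
    isotropyApp (α ≪≫ β) G = isotropyApp α G ≫ isotropyApp β G :=
  isotropyApp_eq (by
    change coprod.inr ≫ appCoprod α.hom G ≫ appCoprod β.hom G = _
    rw [reassoc_of% (inr_comp_appCoprod α G), inr_comp_appCoprod β G, Category.assoc])

lemma isotropyApp_refl (G : E) : isotropyApp (Iso.refl (Under.forget F)) G = 𝟙 G :=
  isotropyApp_eq ((Category.comp_id _).trans (Category.id_comp _).symm)

lemma app_eq_isotropyApp (α : Under.forget F ≅ Under.forget F) (X : Under F) :
    α.hom.app X = isotropyApp α X.right := by
  have h : coprod.desc X.hom (𝟙 X.right) ≫ appRight α.hom X =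
      appCoprod α.hom X.right ≫ coprod.desc X.hom (𝟙 X.right) :=
    α.hom.naturality (Under.homMk (coprod.desc X.hom (𝟙 X.right)) (coprod.inl_desc _ _) :
      coprodInl F X.right ⟶ X)
  have h' := coprod.inr ≫= h
  rw [coprod.inr_desc_assoc, Category.id_comp, reassoc_of% (inr_comp_appCoprod α X.right),
    coprod.inr_desc, Category.comp_id] at h'
  exact h'

variable (F) in
noncomputable def isotropyToEnd : Aut (Under.forget F) →* End (𝟭 E) where
  toFun α := { app := isotropyApp α, naturality := fun _ _ g => isotropyApp_naturality α g }
  map_one' := by ext G; exact isotropyApp_refl G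
  map_mul' α β := by ext G; exact isotropyApp_trans β α G

variable (F) in
noncomputable def autForgetMulEquivAutId : Aut (Under.forget F) ≃* Aut (𝟭 E) where
  toFun := (Aut.unitsEndEquivAut _).toMonoidHom.comp (isotropyToEnd F).toHomUnits
  invFun := ((Functor.whiskeringLeft _ _ E).obj (Under.forget F)).mapAut (𝟭 E)
  left_inv α := by ext X; exact (app_eq_isotropyApp α X).symm
  right_inv t := by ext G; exact isotropyApp_eq (t.hom.naturality coprod.inr)
  map_mul' := map_mul _

end Under

end CategoryTheory

namespace CategoryTheory.Functor

variable {D E : Type*} [Category D] [Category E] (ι : D ⥤ E)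

lemma bijective_mapEnd_whiskeringLeft_obj [ι.IsDense] :
    Function.Bijective (((whiskeringLeft D E E).obj ι).mapEnd (𝟭 E)) := by
  have h : ⇑(((whiskeringLeft D E E).obj ι).mapEnd (𝟭 E)) =
      homEquivOfIsLeftKanExtension (𝟭 E) ι.rightUnitor.inv (𝟭 E) := by
    funext t
    apply NatTrans.ext
    funext X
    simp [mapEnd]
  exact h ▸ Equiv.bijective _

noncomputable def endIdMulEquivOfIsDense [ι.IsDense] [ι.Full] [ι.Faithful] :
    End (𝟭 E) ≃* End (𝟭 D) :=
  (MulEquiv.ofBijective _ (bijective_mapEnd_whiskeringLeft_obj ι)).trans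
    (((FullyFaithful.ofFullyFaithful ι).whiskeringRight D).mulEquivEnd (𝟭 D)).symm

noncomputable def autIdMulEquivOfIsDense [ι.IsDense] [ι.Full] [ι.Faithful] :
    Aut (𝟭 E) ≃* Aut (𝟭 D) :=
  (Aut.unitsEndEquivAut _).symm.trans
    ((Units.mapEquiv (endIdMulEquivOfIsDense ι)).trans (Aut.unitsEndEquivAut _))

end CategoryTheory.Functor

namespace CategoryTheory

variable {C : Type u} [SmallCategory C] {J : GrothendieckTopology C}

noncomputable def sheafifyYonedaEquiv {c : C} {G : Sheaf J (Type u)} :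
    ((presheafToSheaf J (Type u)).obj (yoneda.obj c) ⟶ G) ≃ G.obj.obj (op c) :=
  ((sheafificationAdjunction J (Type u)).homEquiv _ _).trans yonedaEquiv

lemma sheafifyYonedaEquiv_comp {c : C} {G G' : Sheaf J (Type u)}
    (f : (presheafToSheaf J (Type u)).obj (yoneda.obj c) ⟶ G) (g : G ⟶ G') :
    sheafifyYonedaEquiv (f ≫ g) = g.hom.app (op c) (sheafifyYonedaEquiv f) := by
  simp only [sheafifyYonedaEquiv, Equiv.trans_apply, Adjunction.homEquiv_naturality_right]
  exact yonedaEquiv_comp _ _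

lemma sheafifyYonedaEquiv_naturality {c c' : Cᵒᵖ} (h : c ⟶ c') {G : Sheaf J (Type u)}
    (f : (presheafToSheaf J (Type u)).obj (yoneda.obj c.unop) ⟶ G) :
    sheafifyYonedaEquiv ((presheafToSheaf J (Type u)).map (yoneda.map h.unop) ≫ f) =
      G.obj.map h (sheafifyYonedaEquiv f) := by
  simp only [sheafifyYonedaEquiv, Equiv.trans_apply, Adjunction.homEquiv_naturality_left]
  exact (yonedaEquiv_naturality' _ _).symm

lemma Sheaf.hom_ext_of_sheafifyYoneda {G G' : Sheaf J (Type u)} {φ ψ : G ⟶ G'}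
    (H : ∀ (c : C) (f : (presheafToSheaf J (Type u)).obj (yoneda.obj c) ⟶ G),
      f ≫ φ = f ≫ ψ) : φ = ψ := by
  ext c x
  have h := congrArg sheafifyYonedaEquiv (H c.unop (sheafifyYonedaEquiv.symm x))
  rwa [sheafifyYonedaEquiv_comp, sheafifyYonedaEquiv_comp, Equiv.apply_symm_apply] at h

lemma sheafifyYonedaEquiv_symm_comp {c : C} {G G' : Sheaf J (Type u)} (x : G.obj.obj (op c))
    (g : G ⟶ G') :
    sheafifyYonedaEquiv.symm x ≫ g = sheafifyYonedaEquiv.symm (g.hom.app (op c) x) := by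
  rw [Equiv.eq_symm_apply, sheafifyYonedaEquiv_comp, Equiv.apply_symm_apply]

lemma sheafifyYonedaEquiv_symm_map {c c' : Cᵒᵖ} (h : c ⟶ c') {G : Sheaf J (Type u)}
    (x : G.obj.obj c) :
    sheafifyYonedaEquiv.symm (G.obj.map h x) =
      (presheafToSheaf J (Type u)).map (yoneda.map h.unop) ≫ sheafifyYonedaEquiv.symm x := by
  rw [Equiv.symm_apply_eq, sheafifyYonedaEquiv_naturality, Equiv.apply_symm_apply]

variable (J) in
abbrev isSheafifiedRepresentable : ObjectProperty (Sheaf J (Type u)) :=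
  fun G => ∃ c : C, Nonempty (G ≅ (presheafToSheaf J (Type u)).obj (yoneda.obj c))

namespace isSheafifiedRepresentable

variable (J) in
noncomputable abbrev mk (c : C) : (isSheafifiedRepresentable J).FullSubcategory :=
  ⟨(presheafToSheaf J (Type u)).obj (yoneda.obj c), c, ⟨Iso.refl _⟩⟩

open Presheaf

lemma restrictedULiftYoneda_map_injective {G G' : Sheaf J (Type u)} {φ ψ : G ⟶ G'}
    (h : (restrictedULiftYoneda.{u} (isSheafifiedRepresentable J).ι).map φ =
      (restrictedULiftYoneda.{u} (isSheafifiedRepresentable J).ι).map ψ) : φ = ψ :=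
  Sheaf.hom_ext_of_sheafifyYoneda fun c f => by
    simpa using ULift.up_injective (ConcreteCategory.congr_hom (CC := fun X ↦ X)
      (NatTrans.congr_app h (op (mk J c))) (ULift.up f))

variable {G G' : Sheaf J (Type u)}
  (φ : (restrictedULiftYoneda.{u} (isSheafifiedRepresentable J).ι).obj G ⟶
    (restrictedULiftYoneda.{u} (isSheafifiedRepresentable J).ι).obj G')

noncomputable def homApp (X : (isSheafifiedRepresentable J).FullSubcategory) (g : X.obj ⟶ G) :
    X.obj ⟶ G' :=
  (φ.app (op X) (ULift.up g)).down

lemma homApp_comp {X Y : (isSheafifiedRepresentable J).FullSubcategory} (a : X ⟶ Y)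
    (g : Y.obj ⟶ G) : homApp φ X (a.hom ≫ g) = a.hom ≫ homApp φ Y g := by
  let x : ((restrictedULiftYoneda.{u} (isSheafifiedRepresentable J).ι).obj G).obj (op Y) :=
    ULift.up g
  exact congrArg ULift.down (types_congr_hom (φ.naturality a.op) x)

noncomputable def preimage : G ⟶ G' :=
  ObjectProperty.homMk
    { app c := ↾fun x =>
        sheafifyYonedaEquiv (homApp φ (mk J c.unop) (sheafifyYonedaEquiv.symm x))
      naturality c c' h := by
        ext x
        have := homApp_comp φ (ObjectProperty.homMk ((presheafToSheaf J (Type u)).map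
          (yoneda.map h.unop)) : mk J c'.unop ⟶ mk J c.unop) (sheafifyYonedaEquiv.symm x)
        dsimp only [ObjectProperty.homMk_hom] at this
        dsimp only [TypeCat.Fun.toFun_apply, types_comp_apply, TypeCat.hom_ofHom,
          TypeCat.Fun.coe_mk]
        rw [sheafifyYonedaEquiv_symm_map, this, sheafifyYonedaEquiv_naturality] }

lemma preimage_app (c : C) (x : G.obj.obj (op c)) :
    (preimage φ).hom.app (op c) x =
      sheafifyYonedaEquiv (homApp φ (mk J c) (sheafifyYonedaEquiv.symm x)) :=
  rfl

lemma map_preimage :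
    (restrictedULiftYoneda.{u} (isSheafifiedRepresentable J).ι).map (preimage φ) = φ := by
  ext ⟨X⟩ ⟨g⟩
  apply ULift.ext
  change g ≫ preimage φ = homApp φ X g
  refine Sheaf.hom_ext_of_sheafifyYoneda fun c f => ?_
  calc f ≫ g ≫ preimage φ
      = sheafifyYonedaEquiv.symm (sheafifyYonedaEquiv (f ≫ g)) ≫ preimage φ := by
        rw [Equiv.symm_apply_apply, Category.assoc]
    _ = homApp φ (mk J c) (f ≫ g) := by
        rw [sheafifyYonedaEquiv_symm_comp, preimage_app, Equiv.symm_apply_apply,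
          Equiv.symm_apply_apply]
    _ = f ≫ homApp φ X g := homApp_comp φ (ObjectProperty.homMk f : mk J c ⟶ X) g

instance : (isSheafifiedRepresentable J).ι.IsDense :=
  have : (restrictedULiftYoneda.{u} (isSheafifiedRepresentable J).ι).Full :=
    ⟨fun φ => ⟨preimage φ, map_preimage φ⟩⟩
  have : (restrictedULiftYoneda.{u} (isSheafifiedRepresentable J).ι).Faithful :=
    ⟨restrictedULiftYoneda_map_injective⟩
  .of_fullyFaithful_restrictedULiftYoneda (.ofFullyFaithful _)

end isSheafifiedRepresentable

end CategoryTheory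

/-- For an arbitrary small site `(C, J)`, letting `ayC` denote the full
subcategory of `Sh(C, J)` on the sheaves isomorphic to a sheafification of a
representable presheaf, the covariant isotropy group of any sheaf `F`, i.e. the
group of natural automorphisms of the projection functor `F/Sh(C,J) ⥤ Sh(C,J)`,
is isomorphic to `Aut (𝟭 ayC)`. -/
theorem isotropy_of_sheaf_iso_aut_id_ayC {C : Type u} [SmallCategory C]
    (J : GrothendieckTopology C) (F : Sheaf J (Type u)) :
    Nonempty (Aut (Under.forget F) ≃*
      Aut (𝟭 (ObjectProperty.FullSubcategory (fun G : Sheaf J (Type u) =>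
        ∃ C₀ : C, Nonempty (G ≅ (presheafToSheaf J (Type u)).obj (yoneda.obj C₀)))))) :=
  ⟨(Under.autForgetMulEquivAutId F).trans
    (isSheafifiedRepresentable J).ι.autIdMulEquivOfIsDense⟩
end

section
/- Let (𝒞, J) be an arbitrary small site and let ay𝒞 denote the full subcategory of Sh(𝒞, J) on those sheaves isomorphic to the sheafification of a representable presheaf 𝒞(−, C) for some object C of 𝒞. Then the centre of the Grothendieck topos Sh(𝒞, J), i.e. the group Aut(𝟭_{Sh(𝒞, J)}) of natural automorphisms of its identity functor, is isomorphic as a group to Aut(𝟭_{ay𝒞}). -/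
/-!
Sheafification is a left adjoint, so it carries the canonical presentation of the underlying
presheaf of a sheaf `F` as a colimit of representables to a presentation of `F` as a colimit of
sheafified representables. Since every map from an object of `ay𝒞` to `F` factors through one of
its legs, the inclusion `ι` of `ay𝒞` is dense. For a dense functor `ι`, the identity is the left Kan
extension of `ι` along itself, so endomorphisms of the identity correspond to endomorphisms of
`ι`; as `ι` is fully faithful, these are the endomorphisms of the identity of `ay𝒞`.
-/

open CategoryTheory Limits

universe u v₁ v₂ v₃ u₁ u₂ u₃

namespace CategoryTheory

open CategoryTheory.Functor

section Centre

variable {A D : Type*} [Category A] [Category D]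

noncomputable def Functor.IsDense.catCenterEquiv (F : A ⥤ D) [F.IsDense] :
    CatCenter D ≃ (F ⟶ F) :=
  homEquivOfIsLeftKanExtension (𝟭 D) F.rightUnitor.inv (𝟭 D)

@[simp]
lemma Functor.IsDense.catCenterEquiv_app (F : A ⥤ D) [F.IsDense] (z : CatCenter D) (X : A) :
    (IsDense.catCenterEquiv F z).app X = z.app (F.obj X) :=
  Category.id_comp _

def Functor.FullyFaithful.catCenterEquiv {F : A ⥤ D} (hF : F.FullyFaithful) :
    CatCenter A ≃ (F ⟶ F) :=
  (hF.whiskeringRight A).homEquiv (X := 𝟭 A) (Y := 𝟭 A)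

@[simp]
lemma Functor.FullyFaithful.catCenterEquiv_app {F : A ⥤ D} (hF : F.FullyFaithful)
    (z : CatCenter A) (X : A) : (hF.catCenterEquiv z).app X = F.map (z.app X) :=
  rfl

@[simp]
lemma Functor.FullyFaithful.map_catCenterEquiv_symm_app {F : A ⥤ D} (hF : F.FullyFaithful)
    (φ : F ⟶ F) (X : A) : F.map ((hF.catCenterEquiv.symm φ).app X) = φ.app X := by
  rw [← catCenterEquiv_app, Equiv.apply_symm_apply]

noncomputable def CatCenter.mulEquivOfIsDense {F : A ⥤ D} (hF : F.FullyFaithful) [F.IsDense] :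
    CatCenter D ≃* CatCenter A where
  toEquiv := (IsDense.catCenterEquiv F).trans hF.catCenterEquiv.symm
  map_mul' x y := hF.catCenterEquiv.injective <| by
    ext X
    simp

noncomputable def autIdMulEquivOfIsDense {F : A ⥤ D} (hF : F.FullyFaithful) [F.IsDense] :
    Aut (𝟭 D) ≃* Aut (𝟭 A) :=
  (Aut.unitsEndEquivAut _).symm.trans
    ((Units.mapEquiv (CatCenter.mulEquivOfIsDense hF)).trans (Aut.unitsEndEquivAut _))

end Centre

/-- Unlike `Functor.Final.isColimitWhiskerEquiv`, no connectedness is needed here: the cocone `c`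
is given, and each of its legs factors through a leg of `c.whisker Φ`. -/
noncomputable def Limits.IsColimit.ofWhisker {J J' K : Type*} [Category J] [Category J']
    [Category K] {F : J ⥤ K} {c : Cocone F} (Φ : J' ⥤ J) (hc : IsColimit (c.whisker Φ))
    (hΦ : ∀ j, ∃ j', Nonempty (j ⟶ Φ.obj j')) : IsColimit c where
  desc s := hc.desc (s.whisker Φ)
  fac s j := by
    obtain ⟨j', ⟨k⟩⟩ := hΦ j
    rw [← c.w k, Category.assoc, ← s.w k]
    exact congrArg (F.map k ≫ ·) (hc.fac (s.whisker Φ) j')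
  uniq s m hm := hc.uniq (s.whisker Φ) m fun j' => hm (Φ.obj j')

namespace Adjunction

variable {C : Type u₁} {E : Type u₂} {D : Type u₃} [Category.{v₁} C] [Category.{v₂} E]
  [Category.{v₃} D] (G : C ⥤ E) {L : E ⥤ D} {R : D ⥤ E}
  {P : ObjectProperty D} (hP : ∀ Y, P Y ↔ ∃ c, Nonempty (Y ≅ L.obj (G.obj c)))

/-- `(c, g : G c ⟶ R Y) ↦ (L (G c), L g ≫ ε_Y)` -/
def mapCostructuredArrow (adj : L ⊣ R) (Y : D) :
    CostructuredArrow G (R.obj Y) ⥤ CostructuredArrow P.ι Y :=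
  CostructuredArrow.post G L (R.obj Y) ⋙ CostructuredArrow.map (adj.counit.app Y) ⋙
    CostructuredArrow.pre (P.lift (G ⋙ L) fun c => (hP _).2 ⟨c, ⟨Iso.refl _⟩⟩) P.ι Y

include hP in
lemma exists_hom_to_mapCostructuredArrow_obj (adj : L ⊣ R) {Y : D}
    (j : CostructuredArrow P.ι Y) :
    ∃ j', Nonempty (j ⟶ (mapCostructuredArrow G hP adj Y).obj j') := by
  obtain ⟨c, ⟨e⟩⟩ := (hP _).1 j.left.property
  refine ⟨CostructuredArrow.mk (adj.homEquiv _ _ (e.inv ≫ j.hom)),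
    ⟨CostructuredArrow.homMk (ObjectProperty.homMk e.hom) ?_⟩⟩
  simp [mapCostructuredArrow, CostructuredArrow.post, ← homEquiv_counit]

noncomputable def isColimitWhiskerMapCostructuredArrow [G.IsDense] (adj : L ⊣ R)
    [R.Full] [R.Faithful] (Y : D) :
    IsColimit (((LeftExtension.mk (𝟭 D) P.ι.rightUnitor.inv).coconeAt Y).whisker
      (mapCostructuredArrow G hP adj Y)) :=
  have := adj.leftAdjoint_preservesColimits
  IsColimit.ofIsoColimit (isColimitOfPreserves L (G.denseAt (R.obj Y)))
    (Cocone.ext (asIso (adj.counit.app Y) : L.obj (R.obj Y) ≅ Y) (fun j => by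
      show L.map (𝟙 _ ≫ j.hom) ≫ adj.counit.app Y = 𝟙 _ ≫ L.map j.hom ≫ adj.counit.app Y
      simp))

include hP in
theorem isDense_ι [G.IsDense] (adj : L ⊣ R) [R.Full] [R.Faithful] : P.ι.IsDense where
  isDenseAt Y := ⟨IsColimit.ofWhisker _ (isColimitWhiskerMapCostructuredArrow G hP adj Y)
    (exists_hom_to_mapCostructuredArrow_obj G hP adj)⟩

end Adjunction

end CategoryTheory

/-- For an arbitrary small site `(C, J)`, the centre of the Grothendieck
topos `Sh(C, J)`, i.e. the group of natural automorphisms of its identity functor,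
is isomorphic to `Aut (𝟭 ayC)`, where `ayC` is the full subcategory of `Sh(C, J)`
on the sheaves isomorphic to a sheafification of a representable presheaf. -/
theorem centre_of_sheaf_topos_iso_aut_id_ayC {C : Type u} [SmallCategory C]
    (J : GrothendieckTopology C) :
    Nonempty (Aut (𝟭 (Sheaf J (Type u))) ≃*
      Aut (𝟭 (ObjectProperty.FullSubcategory (fun G : Sheaf J (Type u) =>
        ∃ C₀ : C, Nonempty (G ≅ (presheafToSheaf J (Type u)).obj (yoneda.obj C₀)))))) := by
  have := Adjunction.isDense_ι yoneda (fun _ => Iff.rfl) (sheafificationAdjunction J (Type u))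
  exact ⟨autIdMulEquivOfIsDense (ObjectProperty.fullyFaithfulι _)⟩
end

section
/- Let (𝒞, J) be a small subcanonical site. Then the centre of the Grothendieck topos Sh(𝒞, J), i.e. the group Aut(𝟭_{Sh(𝒞, J)}) of natural automorphisms of its identity functor, is isomorphic as a group to Aut(𝟭_𝒞), the group of natural automorphisms of the identity functor of 𝒞. -/
/-!
Restriction along the Yoneda embedding `C ⥤ Sh(C, J)`, which is fully faithful since `J` is
subcanonical, is a monoid map from the centre of `Sh(C, J)` to that of `C`. It is injective
because representable sheaves separate morphisms, and surjective because `z ∈ Z(C)` acts on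
every presheaf `F` by `F.map (z.app X).op`, an action which preserves sheaves and restricts back
to `z`. Passing to units gives the isomorphism of automorphism groups.
-/

open CategoryTheory Opposite

universe u

namespace CategoryTheory

variable {C D : Type*} [Category* C] [Category* D]

namespace Functor.FullyFaithful

variable {ι : C ⥤ D} (hι : ι.FullyFaithful)

def restrictCatCenter : CatCenter D →* CatCenter C where
  toFun z :=
    { app X := hι.preimage (z.app (ι.obj X))
      naturality X Y f := hι.map_injective (by simp [CatCenter.naturality]) }
  map_one' := by ext X; exact hι.preimage_id
  map_mul' z z' := by ext X; exact hι.preimage_comp _ _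

@[simp]
lemma map_restrictCatCenter_app (z : CatCenter D) (X : C) :
    ι.map ((hι.restrictCatCenter z).app X) = z.app (ι.obj X) :=
  hι.map_preimage _

lemma restrictCatCenter_injective (hsep : (ObjectProperty.ofObj ι.obj).IsSeparating) :
    Function.Injective hι.restrictCatCenter := by
  intro z z' h
  ext Y
  refine hsep _ _ ?_
  rintro _ ⟨X⟩ g
  rw [CatCenter.naturality, CatCenter.naturality, ← hι.map_restrictCatCenter_app,
    ← hι.map_restrictCatCenter_app, h]

end Functor.FullyFaithful

namespace CatCenter

def presheaf (A : Type*) [Category* A] (z : CatCenter C) : CatCenter (Cᵒᵖ ⥤ A) :=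
  (Functor.whiskeringLeft Cᵒᵖ Cᵒᵖ A).map (NatTrans.op z)

def sheaf (J : GrothendieckTopology C) (A : Type*) [Category* A] (z : CatCenter C) :
    CatCenter (Sheaf J A) :=
  (fullyFaithfulSheafToPresheaf J A).restrictCatCenter (z.presheaf A)

end CatCenter

namespace GrothendieckTopology

variable (J : GrothendieckTopology C) [J.Subcanonical]

lemma isSeparating_ofObj_yoneda : (ObjectProperty.ofObj J.yoneda.obj).IsSeparating := by
  intro F G f g h
  ext ⟨X⟩ s
  let φ : J.yoneda.obj X ⟶ F := ObjectProperty.homMk (CategoryTheory.yonedaEquiv.symm s)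
  simpa [φ] using congr_arg (fun ψ => ψ.hom.app (op X) (𝟙 X))
    (h _ (ObjectProperty.ofObj_apply _ X) φ)

lemma restrictCatCenter_yoneda_sheaf (z : CatCenter C) :
    J.yonedaFullyFaithful.restrictCatCenter (z.sheaf J _) = z := by
  ext X
  apply J.yonedaFullyFaithful.map_injective
  rw [Functor.FullyFaithful.map_restrictCatCenter_app]
  ext Y f
  exact (z.naturality f).symm

noncomputable def catCenterSheafEquiv : CatCenter (Sheaf J (Type _)) ≃* CatCenter C :=
  MulEquiv.ofBijective J.yonedaFullyFaithful.restrictCatCenter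
    ⟨J.yonedaFullyFaithful.restrictCatCenter_injective J.isSeparating_ofObj_yoneda,
      Function.LeftInverse.surjective J.restrictCatCenter_yoneda_sheaf⟩

end GrothendieckTopology

end CategoryTheory

/-- For a small subcanonical site `(C, J)`, the centre of the
Grothendieck topos `Sh(C, J)`, i.e. the group of natural automorphisms of its
identity functor, is isomorphic to `Aut (𝟭 C)`. -/
theorem centre_of_sheaf_topos_iso_aut_id {C : Type u} [SmallCategory C]
    (J : GrothendieckTopology C)
    (hsub : ∀ X : C, Presieve.IsSheaf J (yoneda.obj X)) :
    Nonempty (Aut (𝟭 (Sheaf J (Type u))) ≃* Aut (𝟭 C)) := by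
  have := GrothendieckTopology.Subcanonical.of_isSheaf_yoneda_obj J hsub
  exact ⟨(Aut.unitsEndEquivAut _).symm.trans
    ((Units.mapEquiv J.catCenterSheafEquiv).trans (Aut.unitsEndEquivAut _))⟩
end

section
/- Let (𝒞, J) be an arbitrary small site and let F be a J-sheaf of sets. For every ψ ∈ Aut(𝟭_𝒞), the family assigning to each sheaf morphism γ : F ⟶ G the endomorphism of G with component at each object C of 𝒞 given by G(ψ_C) : G(C) → G(C) is a well-defined natural automorphism of the projection functor from the under category F/Sh(𝒞, J) to Sh(𝒞, J); moreover, the resulting assignment Aut(𝟭_𝒞) → Aut(Under.forget F) is a group homomorphism. -/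
open CategoryTheory Opposite

universe u

/-!
An automorphism `ψ` of `𝟭 C` is an invertible element of the center `End (𝟭 C)`. Precomposing
presheaves with `ψᵒᵖ` turns central elements of `C` into central elements of the presheaf
category; these restrict to the full subcategory of sheaves and then whisker along any functor,
in particular along `Under.forget F`. Each step is a monoid homomorphism, hence so is the
induced map on units.
-/

namespace CategoryTheory.CatCenter

def presheafMonoidHom {C : Type*} [Category C] (D : Type*) [Category D] :
    CatCenter C →* CatCenter (Cᵒᵖ ⥤ D) where
  toFun r := (Functor.whiskeringLeft Cᵒᵖ Cᵒᵖ D).map (NatTrans.op r)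
  map_one' := by ext; simp
  map_mul' r s := by
    -- `NatTrans.op` reverses composition; commutativity of the center undoes this.
    rw [mul_comm' r s]
    exact (Functor.whiskeringLeft Cᵒᵖ Cᵒᵖ D).map_comp (NatTrans.op s) (NatTrans.op r)

def fullSubcategoryMonoidHom {E : Type*} [Category E] (P : ObjectProperty E) :
    CatCenter E →* CatCenter P.FullSubcategory where
  toFun r :=
    { app X := ObjectProperty.homMk (r.app X.obj)
      naturality _ _ f := ObjectProperty.hom_ext _ (r.naturality f.hom) }
  map_one' := rfl
  map_mul' _ _ := rfl

def whiskerLeftMonoidHom {D E : Type*} [Category D] [Category E] (G : D ⥤ E) :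
    CatCenter E →* End G where
  toFun r := Functor.whiskerLeft G r
  map_one' := rfl
  map_mul' _ _ := rfl

end CategoryTheory.CatCenter

/-- For an arbitrary small site `(C, J)` and a sheaf `F`, each
`ψ ∈ Aut (𝟭 C)` gives rise to a natural automorphism of the projection functor
`F/Sh(C,J) ⥤ Sh(C,J)` whose component at a sheaf morphism `γ : F ⟶ G` has
component `G(ψ_C)` at each object `C`, and the resulting assignment
`Aut (𝟭 C) → Aut (Under.forget F)` is a group homomorphism. -/
theorem aut_id_to_isotropy_hom {C : Type u} [SmallCategory C]
    (J : GrothendieckTopology C) (F : Sheaf J (Type u)) :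
    ∃ h : Aut (𝟭 C) →* Aut (Under.forget F),
      ∀ (ψ : Aut (𝟭 C)) (g : Under F) (C₀ : C),
        ((h ψ).hom.app g).hom.app (op C₀) = g.right.obj.map (ψ.hom.app C₀).op := by
  let φ : CatCenter C →* End (Under.forget F) :=
    (CatCenter.whiskerLeftMonoidHom (Under.forget F)).comp
      ((CatCenter.fullSubcategoryMonoidHom _).comp (CatCenter.presheafMonoidHom (Type u)))
  refine ⟨(Aut.unitsEndEquivAut _).toMonoidHom.comp
    ((Units.map φ).comp (Aut.unitsEndEquivAut _).symm.toMonoidHom), fun ψ g C₀ => ?_⟩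
  show ((φ ψ.hom).app g).hom.app (op C₀) = _
  rfl
end

section
/- Let (𝒞, J) be a small site in which no object is covered by the empty sieve, let F be a J-sheaf of sets, let f : D → C be a morphism of 𝒞, and let a ∈ F(D). Then there exist a J-sheaf G, a sheaf morphism η : F ⟶ G, and an element y ∈ G(C) such that G(f)(y) ≠ η_D(a); that is, the restriction map G(f) : G(C) → G(D) is not constantly equal to η_D(a). -/
/-!
Take for `G` the sheaf `Ω` of `J`-closed sieves and for `η` the composite `F ⟶ 1 ⟶ Ω` of
`truth`, so that `η_D(a)` is the maximal sieve on `D`. Restricting the closure of the empty sieve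
on `C₀` along `f` gives the closure of the empty sieve on `D`, which is maximal exactly when the
empty sieve covers `D`.
-/

open CategoryTheory Opposite

universe u

namespace CategoryTheory.GrothendieckTopology

variable {C : Type*} [Category C] (J : GrothendieckTopology C)

theorem pullback_close_bot_eq_top_iff {X Y : C} (f : Y ⟶ X) :
    (J.close (⊥ : Sieve X)).pullback f = ⊤ ↔ (⊥ : Sieve Y) ∈ J Y := by
  rw [← J.pullback_close, Sieve.pullback_bot, J.close_eq_top_iff_mem]

end CategoryTheory.GrothendieckTopology

/-- Let `(C, J)` be a small site in which no object is covered by the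
empty sieve, `F` a sheaf, `f : D ⟶ C₀` a morphism of `C` and `a ∈ F(D)`. Then there
are a sheaf `G`, a sheaf morphism `η : F ⟶ G` and `y ∈ G(C₀)` with
`G(f)(y) ≠ η_D(a)`; i.e. `G(f)` is not constantly `η_D(a)`. -/
theorem restriction_not_constant {C : Type u} [SmallCategory C]
    (J : GrothendieckTopology C)
    (hJ : ∀ X : C, (⊥ : Sieve X) ∉ J X)
    (F : Sheaf J (Type u)) {D C₀ : C} (f : D ⟶ C₀) (a : F.val.obj (op D)) :
    ∃ (G : Sheaf J (Type u)) (η : F ⟶ G) (y : G.val.obj (op C₀)),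
      G.val.map f.op y ≠ η.hom.app (op D) a := by
  refine ⟨Sheaf.Ω J, (Sheaf.isTerminalTerminal J _).from F ≫ Sheaf.truth J,
    ⟨J.close ⊥, J.close_isClosed ⊥⟩, fun h => hJ D ?_⟩
  rw [← J.pullback_close_bot_eq_top_iff f]
  exact congrArg Subtype.val h
end

section
/- Let (𝒞, J) be a small subcanonical site in which no object is covered by the empty sieve, let F be a J-sheaf of sets, and let f, g : D → C be parallel morphisms of 𝒞 with f ≠ g. Then there exist a J-sheaf G, a sheaf morphism η : F ⟶ G, and an element x ∈ G(C) such that G(f)(x) ≠ G(g)(x). -/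
/-!
Take `G = F ⨿ y C₀`, the coproduct in the category of sheaves, where `y C₀` is the representable
sheaf, and let `x ∈ G(C₀)` be the Yoneda element of the injection `inr : y C₀ ⟶ G`, so that
`G(h)(x) = inr(h)` for every `h : D ⟶ C₀`. The category of sheaves of sets is extensive, hence
its coproduct injections are monomorphisms, i.e. injective on sections; so `inr(f) ≠ inr(g)`.
-/

open CategoryTheory Limits Opposite

universe u

namespace CategoryTheory.Sheaf

universe v w

variable {C : Type*} [Category.{v} C] {J : GrothendieckTopology C}

lemma mono_coprod_inr [HasSheafify J (Type w)] (F G : Sheaf J (Type w))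
    [HasBinaryCoproduct F G] : Mono (coprod.inr : G ⟶ F ⨿ G) :=
  have : FinitaryExtensive (Sheaf J (Type w)) := SheafOfTypes.finitary_extensive
  FinitaryExtensive.mono_inr_of_isColimit (colimit.isColimit _)

lemma map_yonedaEquiv_injective [J.Subcanonical] [HasWeakSheafify J (Type v)]
    {G : Sheaf J (Type v)} {X : C} (ι : J.yoneda.obj X ⟶ G) [Mono ι] (Y : C) :
    Function.Injective fun h : Y ⟶ X ↦ G.obj.map h.op (J.yonedaEquiv ι) := by
  intro h h' eq
  simp only [GrothendieckTopology.map_yonedaEquiv] at eq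
  exact injective_of_mono (ι.hom.app (op Y)) eq

end CategoryTheory.Sheaf

theorem separates_parallel_morphisms_general {C : Type u} [SmallCategory C]
    (J : GrothendieckTopology C)
    (hsub : ∀ X : C, Presieve.IsSheaf J (yoneda.obj X))
    (F : Sheaf J (Type u)) {D C₀ : C} (f g : D ⟶ C₀) (hfg : f ≠ g) :
    ∃ (G : Sheaf J (Type u)) (η : F ⟶ G) (x : G.val.obj (op C₀)),
      G.val.map f.op x ≠ G.val.map g.op x := by
  have : J.Subcanonical := .of_isSheaf_yoneda_obj J hsub
  have : HasBinaryCoproducts (Sheaf J (Type u)) := Sheaf.instHasColimitsOfShape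
  have := Sheaf.mono_coprod_inr F (J.yoneda.obj C₀)
  exact ⟨_, coprod.inl, J.yonedaEquiv coprod.inr,
    fun h ↦ hfg (Sheaf.map_yonedaEquiv_injective coprod.inr D h)⟩

/-- Let `(C, J)` be a small subcanonical site in which no object is
covered by the empty sieve, `F` a sheaf, and `f, g : D ⟶ C₀` parallel morphisms of
`C` with `f ≠ g`. Then there are a sheaf `G`, a sheaf morphism `η : F ⟶ G` and
`x ∈ G(C₀)` with `G(f)(x) ≠ G(g)(x)`. -/
theorem separates_parallel_morphisms {C : Type u} [SmallCategory C]
    (J : GrothendieckTopology C)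
    (hsub : ∀ X : C, Presieve.IsSheaf J (yoneda.obj X))
    (hJ : ∀ X : C, (⊥ : Sieve X) ∉ J X)
    (F : Sheaf J (Type u)) {D C₀ : C} (f g : D ⟶ C₀) (hfg : f ≠ g) :
    ∃ (G : Sheaf J (Type u)) (η : F ⟶ G) (x : G.val.obj (op C₀)),
      G.val.map f.op x ≠ G.val.map g.op x :=
  separates_parallel_morphisms_general J hsub F f g hfg
end
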